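/- arXiv:2311.14520 — 4 statements merged into one kernel-verified Lean document; each statement's English description precedes it below -/
import Mathlib

section
/- Shifted chain rule for the KL divergence: Let S and T be standard Borel spaces, let μ^{X,Y} and ν^{X,Y} be probability measures on S×T, with first marginals μ^X, ν^X on S, second marginals μ^Y, ν^Y on T, and disintegrations x ↦ μ^{Y|X=x}, x ↦ ν^{Y|X=x}. Let μ^{X'} be any probability measure on S. Then KL(μ^Y ∥ ν^Y) ≤ KL(μ^{X'} ∥ ν^X) + inf_{γ ∈ C(μ^X, μ^{X'})} ∫ KL(μ^{Y|X=x} ∥ ν^{Y|X=x'}) γ(dx, dx'). -/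
open MeasureTheory ProbabilityTheory ENNReal Matrix

noncomputable section

namespace SCR

open scoped Classical

variable {Ω S T : Type*} [MeasurableSpace Ω] [MeasurableSpace S] [MeasurableSpace T]

/-- The Kullback--Leibler divergence `KL(μ ∥ ν)`, valued in `[0, ∞]`.  For probability
measures it agrees with `∫ log (dμ/dν) dμ` when `μ ≪ ν` (written here using the
nonnegative integrand `t ↦ t log t - t + 1` applied to the density), and is `∞` otherwise. -/
def klDiv (μ ν : Measure Ω) : ℝ≥0∞ :=
  if μ ≪ ν then
    ∫⁻ x, ENNReal.ofReal
      ((μ.rnDeriv ν x).toReal * Real.log (μ.rnDeriv ν x).toReal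
        - (μ.rnDeriv ν x).toReal + 1) ∂ν
  else ⊤

/-- Conversion `EReal → ℝ≥0∞`, sending `⊤` to `⊤` and negative values (and `⊥`) to `0`. -/
def erealToENNReal (x : EReal) : ℝ≥0∞ :=
  if x = ⊤ then ⊤ else ENNReal.ofReal x.toReal

/-- The Rényi divergence `R_q(μ ∥ ν)` of order `q`, valued in `[0, ∞]`.  For `q ≠ 1` it is
`(q-1)⁻¹ log ∫ (dμ/dλ)^q (dν/dλ)^(1-q) dλ` with common dominating measure `λ = μ + ν`;
for `q = 1` it is the Kullback--Leibler divergence. -/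
def renyiDiv (q : ℝ) (μ ν : Measure Ω) : ℝ≥0∞ :=
  if q = 1 then klDiv μ ν
  else erealToENNReal ((((q - 1)⁻¹ : ℝ) : EReal) *
    ENNReal.log (∫⁻ x, (μ.rnDeriv (μ + ν) x) ^ q * (ν.rnDeriv (μ + ν) x) ^ (1 - q) ∂(μ + ν)))

/-- `γ` is a coupling of `μ` and `ν`. -/
def IsCoupling (γ : Measure (S × T)) (μ : Measure S) (ν : Measure T) : Prop :=
  γ.fst = μ ∧ γ.snd = ν
/-- integrand -/
def klFun (x : ℝ) : ℝ := x * Real.log x - x + 1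

def phi (t : ℝ≥0∞) : ℝ≥0∞ := ENNReal.ofReal (klFun t.toReal)

lemma klFun_nonneg {x : ℝ} (hx : 0 ≤ x) : 0 ≤ klFun x := by
  rcases eq_or_lt_of_le hx with h | h
  · simp [klFun, ← h]
  · have h1 : Real.log x⁻¹ ≤ x⁻¹ - 1 := Real.log_le_sub_one_of_pos (by positivity)
    rw [Real.log_inv] at h1
    have h2 : x * (1 - x⁻¹) ≤ x * Real.log x := by
      apply mul_le_mul_of_nonneg_left _ h.le
      linarith
    have h3 : x * x⁻¹ = 1 := mul_inv_cancel₀ h.ne'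
    simp only [klFun]; nlinarith
  
lemma continuous_klFun : Continuous klFun :=
  (Real.continuous_mul_log.sub continuous_id).add continuous_const

lemma measurable_klFun : Measurable klFun := continuous_klFun.measurable

lemma measurable_phi : Measurable phi :=
  (measurable_klFun.comp ENNReal.measurable_toReal).ennreal_ofReal

lemma convexOn_klFun : ConvexOn ℝ (Set.Ici 0) klFun := by
  have h : klFun = (fun x : ℝ => x * Real.log x) - (fun x : ℝ => x - 1) := by
    ext x; simp [klFun]; ring
  rw [h]
  exact Real.convexOn_mul_log.sub
    ((concaveOn_id (convex_Ici 0)).sub (convexOn_const 1 (convex_Ici 0)))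

lemma phi_one : phi 1 = 0 := by simp [phi, klFun]

lemma phi_zero : phi 0 = 1 := by simp [phi, klFun]

variable {X : Type*} [MeasurableSpace X]

/-- Jensen's inequality for `phi` and lintegrals. -/
lemma phi_lintegral_le (m : Measure X) [IsProbabilityMeasure m] {w : X → ℝ≥0∞}
    (hw : Measurable w) (hfin : ∫⁻ x, w x ∂m ≠ ⊤) :
    phi (∫⁻ x, w x ∂m) ≤ ∫⁻ x, phi (w x) ∂m := by
  by_cases htop : ∫⁻ x, phi (w x) ∂m = ⊤
  · exact htop ▸ le_top
  have hwlt : ∀ᵐ x ∂m, w x < ⊤ := ae_lt_top hw hfin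
  set g : X → ℝ := fun x => (w x).toReal with hg
  have hgint : Integrable g m := integrable_toReal_of_lintegral_ne_top hw.aemeasurable hfin
  have hintg : ∫ x, g x ∂m = (∫⁻ x, w x ∂m).toReal := integral_toReal hw.aemeasurable hwlt
  have hfg_meas : Measurable (klFun ∘ g) :=
    measurable_klFun.comp (hw.ennreal_toReal)
  have hfg_nonneg : 0 ≤ᵐ[m] (klFun ∘ g) :=
    Filter.Eventually.of_forall fun x => klFun_nonneg ENNReal.toReal_nonneg
  have hfg_int : Integrable (klFun ∘ g) m := by
    refine ⟨hfg_meas.aestronglyMeasurable, ?_⟩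
    rw [hasFiniteIntegral_iff_ofReal hfg_nonneg]
    exact lt_of_le_of_lt (le_of_eq rfl) (lt_of_le_of_ne le_top htop)
  have hjen : klFun (∫ x, g x ∂m) ≤ ∫ x, klFun (g x) ∂m := by
    refine convexOn_klFun.map_integral_le continuous_klFun.continuousOn isClosed_Ici
      (Filter.Eventually.of_forall fun x => ENNReal.toReal_nonneg) hgint hfg_int
  calc phi (∫⁻ x, w x ∂m) = ENNReal.ofReal (klFun (∫ x, g x ∂m)) := by rw [hintg]; rfl
    _ ≤ ENNReal.ofReal (∫ x, klFun (g x) ∂m) := ENNReal.ofReal_le_ofReal hjen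
    _ = ∫⁻ x, ENNReal.ofReal (klFun (g x)) ∂m :=
        ofReal_integral_eq_lintegral_ofReal hfg_int hfg_nonneg
    _ = ∫⁻ x, phi (w x) ∂m := rfl

/-- scaling identity-inequality for `phi`. -/
lemma lintegral_phi_mul_le (m : Measure X) [IsProbabilityMeasure m] {w : X → ℝ≥0∞} {s : ℝ≥0∞}
    (hw : Measurable w) (hs : s ≠ ⊤) (hw1 : s ≠ 0 → ∫⁻ x, w x ∂m = 1) :
    ∫⁻ x, phi (s * w x) ∂m ≤ phi s + s * ∫⁻ x, phi (w x) ∂m := by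
  rcases eq_or_ne s 0 with rfl | hs0
  · simp [phi_zero, lintegral_one]
  by_cases htop : ∫⁻ x, phi (w x) ∂m = ⊤
  · rw [htop, ENNReal.mul_top hs0]; simp
  have hfin : ∫⁻ x, w x ∂m ≠ ⊤ := by rw [hw1 hs0]; exact one_ne_top
  have hwlt : ∀ᵐ x ∂m, w x < ⊤ := ae_lt_top hw hfin
  set g : X → ℝ := fun x => (w x).toReal with hg
  set s' : ℝ := s.toReal with hs'
  have hs'pos : 0 < s' := ENNReal.toReal_pos hs0 hs
  have hgint : Integrable g m := integrable_toReal_of_lintegral_ne_top hw.aemeasurable hfin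
  have hintg : ∫ x, g x ∂m = 1 := by
    rw [integral_toReal hw.aemeasurable hwlt, hw1 hs0]; simp
  have hfg_meas : Measurable (fun x => klFun (g x)) := measurable_klFun.comp (hw.ennreal_toReal)
  have hfg_nonneg : 0 ≤ᵐ[m] (fun x => klFun (g x)) :=
    Filter.Eventually.of_forall fun x => klFun_nonneg ENNReal.toReal_nonneg
  have hfg_int : Integrable (fun x => klFun (g x)) m := by
    refine ⟨hfg_meas.aestronglyMeasurable, ?_⟩
    rw [hasFiniteIntegral_iff_ofReal hfg_nonneg]
    exact lt_of_le_of_lt (le_of_eq rfl) (lt_of_le_of_ne le_top htop)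
  -- pointwise identity
  have hpt : ∀ x : ℝ, 0 ≤ x → klFun (s' * x) = klFun s' + s' * klFun x
      + s' * Real.log s' * (x - 1) := by
    intro x hx
    rcases eq_or_lt_of_le hx with h | h
    · simp [klFun, ← h]; ring
    · simp only [klFun, Real.log_mul hs'pos.ne' h.ne']; ring
  have hcomb_int : Integrable (fun x => klFun s' + s' * klFun (g x)
      + s' * Real.log s' * (g x - 1)) m := by
    refine (((integrable_const _).add (hfg_int.const_mul _)).add
      ((hgint.sub (integrable_const 1)).const_mul _))
  have heqfun : (fun x => klFun (s' * g x)) =ᵐ[m] (fun x => klFun s' + s' * klFun (g x)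
      + s' * Real.log s' * (g x - 1)) :=
    Filter.Eventually.of_forall fun x => hpt (g x) ENNReal.toReal_nonneg
  have hint_eq : ∫ x, klFun (s' * g x) ∂m = klFun s' + s' * ∫ x, klFun (g x) ∂m := by
    rw [integral_congr_ae heqfun]
    have e1 : Integrable (fun x => klFun s' + s' * klFun (g x)) m :=
      (integrable_const _).add (hfg_int.const_mul _)
    have e2 : Integrable (fun x => s' * Real.log s' * (g x - 1)) m :=
      ((hgint.sub (integrable_const 1)).const_mul _)
    rw [integral_add e1 e2, integral_add (integrable_const _) (hfg_int.const_mul _),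
      integral_const, integral_const_mul, integral_const_mul,
      integral_sub hgint (integrable_const 1), hintg]
    simp
  have hsg_int : Integrable (fun x => klFun (s' * g x)) m := by
    refine (hcomb_int.congr heqfun.symm)
  have hsg_nonneg : 0 ≤ᵐ[m] fun x => klFun (s' * g x) :=
    Filter.Eventually.of_forall fun x => klFun_nonneg (by positivity)
  have hleft : ∫⁻ x, phi (s * w x) ∂m = ENNReal.ofReal (∫ x, klFun (s' * g x) ∂m) := by
    have e3 : ∫⁻ x, phi (s * w x) ∂m = ∫⁻ x, ENNReal.ofReal (klFun (s' * g x)) ∂m := by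
      refine lintegral_congr_ae ?_
      filter_upwards [hwlt] with x hx
      simp only [phi, ENNReal.toReal_mul]
      rfl
    rw [e3, ← ofReal_integral_eq_lintegral_ofReal hsg_int hsg_nonneg]
  rw [hleft, hint_eq]
  have h1 : 0 ≤ klFun s' := klFun_nonneg hs'pos.le
  have h2 : 0 ≤ ∫ x, klFun (g x) ∂m := integral_nonneg_of_ae hfg_nonneg
  rw [ENNReal.ofReal_add h1 (by positivity), ENNReal.ofReal_mul hs'pos.le]
  rw [ofReal_integral_eq_lintegral_ofReal hfg_int hfg_nonneg, ENNReal.ofReal_toReal hs]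
  exact le_of_eq rfl

lemma klDiv_eq (μ ν : Measure Ω) :
    klDiv μ ν = if μ ≪ ν then ∫⁻ x, phi (μ.rnDeriv ν x) ∂ν else ⊤ := rfl

lemma klDiv_of_ac {μ ν : Measure Ω} (h : μ ≪ ν) :
    klDiv μ ν = ∫⁻ x, phi (μ.rnDeriv ν x) ∂ν := by rw [klDiv_eq, if_pos h]

lemma ac_of_klDiv_ne_top {μ ν : Measure Ω} (h : klDiv μ ν ≠ ⊤) : μ ≪ ν := by
  by_contra hc
  rw [klDiv_eq, if_neg hc] at h
  exact h rfl

lemma klDiv_self (μ : Measure Ω) [SigmaFinite μ] : klDiv μ μ = 0 := by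
  rw [klDiv_of_ac Measure.AbsolutelyContinuous.rfl]
  have h := Measure.rnDeriv_self μ
  calc ∫⁻ x, phi (μ.rnDeriv μ x) ∂μ = ∫⁻ _x, phi 1 ∂μ := lintegral_congr_ae (by
        filter_upwards [h] with x hx; rw [hx])
    _ = 0 := by simp [phi_one]

/-- measurability of `klDiv` along two kernels. -/
lemma measurable_klDiv {A : Type*} [MeasurableSpace A] [MeasurableSpace.CountablyGenerated Ω]
    (κ η : Kernel A Ω) [IsFiniteKernel κ] [IsFiniteKernel η] :
    Measurable (fun a => klDiv (κ a) (η a)) := by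
  have heq : (fun a => klDiv (κ a) (η a)) = fun a =>
      if κ a ≪ η a then ∫⁻ y, phi (Kernel.rnDeriv κ η a y) ∂(η a) else ⊤ := by
    ext a
    rw [klDiv_eq]
    by_cases h : κ a ≪ η a
    · rw [if_pos h, if_pos h]
      refine lintegral_congr_ae ?_
      filter_upwards [Kernel.rnDeriv_eq_rnDeriv_measure (κ := κ) (η := η) (a := a)] with y hy
      rw [hy]
    · rw [if_neg h, if_neg h]
  rw [heq]
  refine Measurable.ite (Kernel.measurableSet_absolutelyContinuous κ η) ?_ measurable_const
  exact Measurable.lintegral_kernel_prod_right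
    (measurable_phi.comp (Kernel.measurable_rnDeriv κ η))

section ChainRule

variable {A B : Type*} [MeasurableSpace A] [MeasurableSpace B]
  [MeasurableSpace.CountablyGenerated B]
  {α β : Measure A} [IsProbabilityMeasure α] [IsProbabilityMeasure β]
  {K L : Kernel A B} [IsMarkovKernel K] [IsMarkovKernel L]

lemma withDensity_compProd (hαβ : α ≪ β) (hKL : ∀ᵐ x ∂α, K x ≪ L x) :
    (β ⊗ₘ L).withDensity (fun p => α.rnDeriv β p.1 * Kernel.rnDeriv K L p.1 p.2) = α ⊗ₘ K := by
  have hmeas : Measurable fun p : A × B => α.rnDeriv β p.1 * Kernel.rnDeriv K L p.1 p.2 :=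
    ((Measure.measurable_rnDeriv α β).comp measurable_fst).mul (Kernel.measurable_rnDeriv K L)
  have hKL' : ∀ᵐ x ∂β, α.rnDeriv β x ≠ 0 → K x ≪ L x := by
    rw [← MeasureTheory.ae_withDensity_iff (Measure.measurable_rnDeriv α β)]
    rwa [Measure.withDensity_rnDeriv_eq α β hαβ]
  ext s hs
  rw [withDensity_apply _ hs, Measure.compProd_apply hs]
  have h1 : ∫⁻ p in s, α.rnDeriv β p.1 * Kernel.rnDeriv K L p.1 p.2 ∂(β ⊗ₘ L)
      = ∫⁻ p, s.indicator (fun p => α.rnDeriv β p.1 * Kernel.rnDeriv K L p.1 p.2) p ∂(β ⊗ₘ L) :=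
    (lintegral_indicator hs _).symm
  rw [h1, Measure.lintegral_compProd (hmeas.indicator hs)]
  have h2 : ∀ x : A, ∫⁻ y, s.indicator (fun p => α.rnDeriv β p.1 * Kernel.rnDeriv K L p.1 p.2)
        (x, y) ∂(L x)
      = α.rnDeriv β x * ∫⁻ y in Prod.mk x ⁻¹' s, Kernel.rnDeriv K L x y ∂(L x) := by
    intro x
    have hpt : ∀ y : B, s.indicator (fun p => α.rnDeriv β p.1 * Kernel.rnDeriv K L p.1 p.2) (x, y)
        = α.rnDeriv β x * (Prod.mk x ⁻¹' s).indicator (fun y => Kernel.rnDeriv K L x y) y := by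
      intro y
      by_cases hy : (x, y) ∈ s
      · rw [Set.indicator_of_mem hy,
          Set.indicator_of_mem (show y ∈ Prod.mk x ⁻¹' s from hy)]
      · rw [Set.indicator_of_notMem hy,
          Set.indicator_of_notMem (show y ∉ Prod.mk x ⁻¹' s from hy), mul_zero]
    rw [lintegral_congr hpt,
      lintegral_const_mul _ ((Kernel.measurable_rnDeriv_right K L x).indicator
        (measurable_prodMk_left hs)),
      lintegral_indicator (measurable_prodMk_left hs)]
  simp_rw [h2]
  have h3 : ∀ᵐ x ∂β, α.rnDeriv β x * ∫⁻ y in Prod.mk x ⁻¹' s, Kernel.rnDeriv K L x y ∂(L x)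
      = α.rnDeriv β x * K x (Prod.mk x ⁻¹' s) := by
    filter_upwards [hKL'] with x hx
    rcases eq_or_ne (α.rnDeriv β x) 0 with h0 | h0
    · rw [h0, zero_mul, zero_mul]
    · have hac := hx h0
      congr 1
      have : ∫⁻ y in Prod.mk x ⁻¹' s, Kernel.rnDeriv K L x y ∂(L x)
          = ∫⁻ y in Prod.mk x ⁻¹' s, (K x).rnDeriv (L x) y ∂(L x) := by
        refine lintegral_congr_ae (ae_restrict_of_ae ?_)
        filter_upwards [Kernel.rnDeriv_eq_rnDeriv_measure (κ := K) (η := L) (a := x)] with y hy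
          using hy
      rw [this, Measure.setLIntegral_rnDeriv hac]
  rw [lintegral_congr_ae h3,
    MeasureTheory.lintegral_rnDeriv_mul hαβ (Kernel.measurable_kernel_prodMk_left hs).aemeasurable]

lemma rnDeriv_compProd_ae (hαβ : α ≪ β) (hKL : ∀ᵐ x ∂α, K x ≪ L x) :
    (fun p : A × B => α.rnDeriv β p.1 * Kernel.rnDeriv K L p.1 p.2)
      =ᵐ[β ⊗ₘ L] (α ⊗ₘ K).rnDeriv (β ⊗ₘ L) := by
  have hmeas : Measurable fun p : A × B => α.rnDeriv β p.1 * Kernel.rnDeriv K L p.1 p.2 :=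
    ((Measure.measurable_rnDeriv α β).comp measurable_fst).mul (Kernel.measurable_rnDeriv K L)
  have h := Measure.rnDeriv_withDensity (β ⊗ₘ L) hmeas
  rw [withDensity_compProd hαβ hKL] at h
  exact h.symm

/-- Chain rule inequality for the KL divergence. -/
lemma klDiv_compProd_le :
    klDiv (α ⊗ₘ K) (β ⊗ₘ L) ≤ klDiv α β + ∫⁻ x, klDiv (K x) (L x) ∂α := by
  by_cases h1 : klDiv α β = ⊤
  · rw [h1, top_add]; exact le_top
  by_cases h2 : ∫⁻ x, klDiv (K x) (L x) ∂α = ⊤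
  · rw [h2, add_top]; exact le_top
  have hαβ : α ≪ β := ac_of_klDiv_ne_top h1
  have hKL : ∀ᵐ x ∂α, K x ≪ L x := by
    filter_upwards [ae_lt_top (measurable_klDiv K L) h2] with x hx
      using ac_of_klDiv_ne_top hx.ne
  have hAC : α ⊗ₘ K ≪ β ⊗ₘ L := hαβ.compProd hKL
  have hmeas : Measurable fun p : A × B => α.rnDeriv β p.1 * Kernel.rnDeriv K L p.1 p.2 :=
    ((Measure.measurable_rnDeriv α β).comp measurable_fst).mul (Kernel.measurable_rnDeriv K L)
  have hunc : Measurable (Function.uncurry fun x y => phi (Kernel.rnDeriv K L x y)) := by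
    rw [Function.uncurry_def]
    exact measurable_phi.comp (Kernel.measurable_rnDeriv K L)
  rw [klDiv_of_ac hAC]
  have e1 : ∫⁻ p, phi ((α ⊗ₘ K).rnDeriv (β ⊗ₘ L) p) ∂(β ⊗ₘ L)
      = ∫⁻ p, phi (α.rnDeriv β p.1 * Kernel.rnDeriv K L p.1 p.2) ∂(β ⊗ₘ L) := by
    refine lintegral_congr_ae ?_
    filter_upwards [rnDeriv_compProd_ae hαβ hKL] with p hp
    rw [← hp]
  have hphimeas : Measurable fun p : A × B => phi (α.rnDeriv β p.1 * Kernel.rnDeriv K L p.1 p.2) :=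
    measurable_phi.comp hmeas
  rw [e1, Measure.lintegral_compProd hphimeas]
  -- pointwise bound in x
  have hKL' : ∀ᵐ x ∂β, α.rnDeriv β x ≠ 0 → K x ≪ L x := by
    rw [← MeasureTheory.ae_withDensity_iff (Measure.measurable_rnDeriv α β)]
    rwa [Measure.withDensity_rnDeriv_eq α β hαβ]
  have hstep : ∀ᵐ x ∂β, ∫⁻ y, phi (α.rnDeriv β x * Kernel.rnDeriv K L x y) ∂(L x)
      ≤ phi (α.rnDeriv β x) + α.rnDeriv β x * ∫⁻ y, phi (Kernel.rnDeriv K L x y) ∂(L x) := by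
    filter_upwards [hKL', Measure.rnDeriv_lt_top α β] with x hx hxlt
    refine lintegral_phi_mul_le (L x)
      ((Kernel.measurable_rnDeriv K L).comp measurable_prodMk_left) hxlt.ne ?_
    intro h0
    have hac := hx h0
    have : ∫⁻ y, Kernel.rnDeriv K L x y ∂(L x) = ∫⁻ y, (K x).rnDeriv (L x) y ∂(L x) :=
      lintegral_congr_ae (by
        filter_upwards [Kernel.rnDeriv_eq_rnDeriv_measure (κ := K) (η := L) (a := x)] with y hy
          using hy)
    rw [this, Measure.lintegral_rnDeriv hac, measure_univ]
  calc ∫⁻ x, ∫⁻ y, phi (α.rnDeriv β x * Kernel.rnDeriv K L x y) ∂(L x) ∂β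
      ≤ ∫⁻ x, (phi (α.rnDeriv β x) + α.rnDeriv β x
          * ∫⁻ y, phi (Kernel.rnDeriv K L x y) ∂(L x)) ∂β := lintegral_mono_ae hstep
    _ = ∫⁻ x, phi (α.rnDeriv β x) ∂β
        + ∫⁻ x, α.rnDeriv β x * ∫⁻ y, phi (Kernel.rnDeriv K L x y) ∂(L x) ∂β := by
        refine lintegral_add_left (measurable_phi.comp (Measure.measurable_rnDeriv α β)) _
    _ = klDiv α β + ∫⁻ x, ∫⁻ y, phi (Kernel.rnDeriv K L x y) ∂(L x) ∂α := by
        rw [klDiv_of_ac hαβ,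
          MeasureTheory.lintegral_rnDeriv_mul hαβ
            (Measurable.lintegral_kernel_prod_right hunc).aemeasurable]
    _ = klDiv α β + ∫⁻ x, klDiv (K x) (L x) ∂α := by
        congr 1
        refine lintegral_congr_ae ?_
        filter_upwards [hKL] with x hx
        rw [klDiv_of_ac hx]
        refine lintegral_congr_ae ?_
        filter_upwards [Kernel.rnDeriv_eq_rnDeriv_measure (κ := K) (η := L) (a := x)] with y hy
        rw [hy]

end ChainRule

section DataProcessing

variable {A B : Type*} [MeasurableSpace A] [MeasurableSpace B]
  [StandardBorelSpace A] [Nonempty A]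

lemma lintegral_eq_snd_condKernel (Q : Measure (A × B)) [IsFiniteMeasure Q]
    {F : A × B → ℝ≥0∞} (hF : Measurable F) :
    ∫⁻ p, F p ∂Q = ∫⁻ y, ∫⁻ x, F (x, y) ∂((Q.map Prod.swap).condKernel y) ∂Q.snd := by
  set Q' := Q.map Prod.swap with hQ'
  have hG : Measurable fun q : B × A => F (q.2, q.1) := hF.comp measurable_swap
  have hdis : Q'.fst ⊗ₘ Q'.condKernel = Q' := Q'.disintegrate Q'.condKernel
  have h1 : ∫⁻ q, F (q.2, q.1) ∂Q' = ∫⁻ p, F p ∂Q := by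
    rw [hQ', lintegral_map hG measurable_swap]
    exact lintegral_congr fun p => by simp
  rw [← h1, ← hdis, Measure.lintegral_compProd hG]
  have hfst : Q'.fst = Q.snd := by rw [hQ']; exact Measure.fst_map_swap
  rw [hfst]

lemma klDiv_snd_le (P Q : Measure (A × B)) [IsProbabilityMeasure P] [IsProbabilityMeasure Q] :
    klDiv P.snd Q.snd ≤ klDiv P Q := by
  by_cases hPQ : P ≪ Q
  swap
  · rw [klDiv_eq P Q, if_neg hPQ]; exact le_top
  rw [klDiv_of_ac hPQ]
  by_cases hfin : ∫⁻ p, phi (P.rnDeriv Q p) ∂Q = ⊤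
  · rw [hfin]; exact le_top
  set w := P.rnDeriv Q with hw
  have hwmeas : Measurable w := Measure.measurable_rnDeriv P Q
  set Θ := (Q.map Prod.swap).condKernel with hΘ
  set h : B → ℝ≥0∞ := fun y => ∫⁻ x, w (x, y) ∂(Θ y) with hh
  have hhmeas : Measurable h := by
    refine Measurable.lintegral_kernel_prod_right ?_
    rw [Function.uncurry_def]
    exact hwmeas.comp (measurable_swap)
  have hsnd_ac : P.snd ≪ Q.snd := hPQ.map measurable_snd
  -- withDensity identity
  have hwd : Q.snd.withDensity h = P.snd := by
    ext s hs
    rw [withDensity_apply _ hs]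
    have e1 : P.snd s = ∫⁻ p, (Prod.snd ⁻¹' s).indicator w p ∂Q := by
      rw [Measure.snd_apply hs, ← Measure.setLIntegral_rnDeriv hPQ,
        lintegral_indicator (measurable_snd hs)]
    have e2 : ∫⁻ p, (Prod.snd ⁻¹' s).indicator w p ∂Q
        = ∫⁻ y, ∫⁻ x, (Prod.snd ⁻¹' s).indicator w (x, y) ∂(Θ y) ∂Q.snd :=
      lintegral_eq_snd_condKernel Q (hwmeas.indicator (measurable_snd hs))
    have e3 : ∀ y : B, ∫⁻ x, (Prod.snd ⁻¹' s).indicator w (x, y) ∂(Θ y)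
        = s.indicator h y := by
      intro y
      by_cases hy : y ∈ s
      · rw [Set.indicator_of_mem hy]
        refine lintegral_congr fun x => ?_
        rw [Set.indicator_of_mem (show (x, y) ∈ Prod.snd ⁻¹' s from hy)]
      · rw [Set.indicator_of_notMem hy]
        refine (lintegral_congr fun x => ?_).trans lintegral_zero
        rw [Set.indicator_of_notMem (show (x, y) ∉ Prod.snd ⁻¹' s from hy)]
    rw [e1, e2]
    simp_rw [e3]
    rw [lintegral_indicator hs]
  have hrn : (fun y => h y) =ᵐ[Q.snd] P.snd.rnDeriv Q.snd := by
    have := Measure.rnDeriv_withDensity Q.snd hhmeas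
    rw [hwd] at this
    exact this.symm
  rw [klDiv_of_ac hsnd_ac]
  have e4 : ∫⁻ y, phi (P.snd.rnDeriv Q.snd y) ∂Q.snd = ∫⁻ y, phi (h y) ∂Q.snd := by
    refine lintegral_congr_ae ?_
    filter_upwards [hrn] with y hy
    rw [hy]
  rw [e4]
  have hhlt : ∀ᵐ y ∂Q.snd, h y < ⊤ := by
    filter_upwards [hrn, Measure.rnDeriv_lt_top P.snd Q.snd] with y h1 h2
    rw [h1]; exact h2
  have hjen : ∀ᵐ y ∂Q.snd, phi (h y) ≤ ∫⁻ x, phi (w (x, y)) ∂(Θ y) := by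
    filter_upwards [hhlt] with y hy
    exact phi_lintegral_le (Θ y) (hwmeas.comp measurable_prodMk_right) hy.ne
  calc ∫⁻ y, phi (h y) ∂Q.snd ≤ ∫⁻ y, ∫⁻ x, phi (w (x, y)) ∂(Θ y) ∂Q.snd :=
        lintegral_mono_ae hjen
    _ = ∫⁻ p, phi (w p) ∂Q := (lintegral_eq_snd_condKernel Q (measurable_phi.comp hwmeas)).symm

end DataProcessing

section Main

lemma snd_compProd_apply (m : Measure S) [SFinite m] (κ : Kernel S T) [IsSFiniteKernel κ]
    {s : Set T} (hs : MeasurableSet s) :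
    (m ⊗ₘ κ).snd s = ∫⁻ x, κ x s ∂m := by
  rw [Measure.snd_apply hs, Measure.compProd_apply (measurable_snd hs)]
  refine lintegral_congr fun x => ?_
  congr 1


/-- **Shifted chain rule for the KL divergence.** -/
theorem shifted_chain_rule_klDiv [StandardBorelSpace S] [StandardBorelSpace T]
    (μXY νXY : Measure (S × T)) [IsProbabilityMeasure μXY] [IsProbabilityMeasure νXY]
    (κ η : Kernel S T) [IsMarkovKernel κ] [IsMarkovKernel η]
    (hκ : μXY = μXY.fst ⊗ₘ κ) (hη : νXY = νXY.fst ⊗ₘ η)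
    (μX' : Measure S) [IsProbabilityMeasure μX'] :
    klDiv μXY.snd νXY.snd ≤
      klDiv μX' νXY.fst +
        ⨅ γ ∈ {γ : Measure (S × S) | IsCoupling γ μXY.fst μX'},
          ∫⁻ p, klDiv (κ p.1) (η p.2) ∂γ := by
  have hSTne : Nonempty (S × T) := by
    by_contra hc
    rw [not_nonempty_iff] at hc
    have h0 : μXY Set.univ = 1 := measure_univ
    rw [Set.univ_eq_empty_iff.mpr hc, measure_empty] at h0
    exact zero_ne_one h0
  have hS : Nonempty S := ⟨(Classical.choice hSTne).1⟩
  have hSS : Nonempty (S × S) := ⟨((Classical.choice hSTne).1, (Classical.choice hSTne).1)⟩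
  simp_rw [ENNReal.add_iInf]
  refine le_iInf fun γ => le_iInf fun hγ => ?_
  obtain ⟨hγ1, hγ2⟩ := (hγ : IsCoupling γ μXY.fst μX')
  haveI hγP : IsProbabilityMeasure γ := ⟨by rw [← Measure.fst_univ, hγ1]; exact measure_univ⟩
  haveI : IsProbabilityMeasure μXY.fst := ⟨by rw [Measure.fst_univ]; exact measure_univ⟩
  haveI : IsProbabilityMeasure νXY.fst := ⟨by rw [Measure.fst_univ]; exact measure_univ⟩
  haveI : IsProbabilityMeasure μXY.snd := ⟨by rw [Measure.snd_univ]; exact measure_univ⟩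
  haveI : IsProbabilityMeasure νXY.snd := ⟨by rw [Measure.snd_univ]; exact measure_univ⟩
  by_cases hA : klDiv μX' νXY.fst = ⊤
  · rw [hA, top_add]; exact le_top
  by_cases hB : ∫⁻ p, klDiv (κ p.1) (η p.2) ∂γ = ⊤
  · rw [hB, add_top]; exact le_top
  -- kernels on S × S
  set K : Kernel (S × S) T := κ.comap Prod.snd measurable_snd with hK
  set L : Kernel (S × S) T := η.comap Prod.fst measurable_fst with hL
  haveI : IsMarkovKernel K := ⟨fun p => by rw [hK, Kernel.comap_apply]; infer_instance⟩
  haveI : IsMarkovKernel L := ⟨fun p => by rw [hL, Kernel.comap_apply]; infer_instance⟩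
  have hKLmeas : Measurable fun p : S × S => klDiv (K p) (L p) := measurable_klDiv K L
  -- swapped coupling and its disintegration
  set γ' := γ.map Prod.swap with hγ'
  haveI : IsProbabilityMeasure γ' := Measure.isProbabilityMeasure_map measurable_swap.aemeasurable
  have hγ'fst : γ'.fst = μX' := by rw [hγ', Measure.fst_map_swap, hγ2]
  have hγ'snd : γ'.snd = μXY.fst := by rw [hγ', Measure.snd_map_swap, hγ1]
  set ξ := γ'.condKernel with hξ
  have hdisγ : γ'.fst ⊗ₘ ξ = γ' := γ'.disintegrate γ'.condKernel
  have hswap : ∫⁻ p, klDiv (K p) (L p) ∂γ' = ∫⁻ p, klDiv (κ p.1) (η p.2) ∂γ := by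
    rw [hγ', lintegral_map hKLmeas measurable_swap]
    refine lintegral_congr fun p => ?_
    rw [hK, hL, Kernel.comap_apply, Kernel.comap_apply]
    simp
  -- big measures on (S × S) × T
  set ρ := γ' ⊗ₘ K with hρ
  set τ := (νXY.fst ⊗ₘ ξ) ⊗ₘ L with hτ
  have hρsnd : ρ.snd = μXY.snd := by
    ext s hs
    rw [hρ, snd_compProd_apply _ _ hs]
    have e1 : ∀ p : S × S, K p s = κ p.2 s := fun p => by rw [hK, Kernel.comap_apply]
    simp_rw [e1]
    have e2 : ∫⁻ p : S × S, κ p.2 s ∂γ' = ∫⁻ x, κ x s ∂γ'.snd := by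
      rw [Measure.snd, lintegral_map (κ.measurable_coe hs) measurable_snd]
    rw [e2, hγ'snd]
    conv_rhs => rw [hκ]
    rw [snd_compProd_apply _ _ hs]
  have hτsnd : τ.snd = νXY.snd := by
    ext s hs
    rw [hτ, snd_compProd_apply _ _ hs]
    have e1 : ∀ p : S × S, L p s = η p.1 s := fun p => by rw [hL, Kernel.comap_apply]
    simp_rw [e1]
    have e2 : ∫⁻ p : S × S, η p.1 s ∂(νXY.fst ⊗ₘ ξ) = ∫⁻ x, η x s ∂(νXY.fst ⊗ₘ ξ).fst := by
      conv_rhs => rw [Measure.fst]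
      rw [lintegral_map (η.measurable_coe hs) measurable_fst]
    rw [e2, Measure.fst_compProd]
    conv_rhs => rw [hη]
    rw [snd_compProd_apply _ _ hs]
  have h3 : klDiv γ' (νXY.fst ⊗ₘ ξ) ≤ klDiv μX' νXY.fst + ∫⁻ x, klDiv (ξ x) (ξ x) ∂μX' := by
    have e : μX' ⊗ₘ ξ = γ' := by rw [← hγ'fst]; exact hdisγ
    rw [← e]
    exact klDiv_compProd_le
  have hzero : ∫⁻ x, klDiv (ξ x) (ξ x) ∂μX' = 0 := by
    rw [lintegral_congr fun x => klDiv_self (ξ x)]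
    exact lintegral_zero
  calc klDiv μXY.snd νXY.snd = klDiv ρ.snd τ.snd := by rw [hρsnd, hτsnd]
    _ ≤ klDiv ρ τ := klDiv_snd_le ρ τ
    _ ≤ klDiv γ' (νXY.fst ⊗ₘ ξ) + ∫⁻ p, klDiv (K p) (L p) ∂γ' := klDiv_compProd_le
    _ ≤ (klDiv μX' νXY.fst + ∫⁻ x, klDiv (ξ x) (ξ x) ∂μX')
        + ∫⁻ p, klDiv (κ p.1) (η p.2) ∂γ := by
        rw [hswap]
        exact add_le_add h3 le_rfl
    _ = klDiv μX' νXY.fst + ∫⁻ p, klDiv (κ p.1) (η p.2) ∂γ := by rw [hzero, add_zero]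


end Main
end SCR
end
end

section
/- Shifted composition rule for Rényi divergences of order q ∈ (0,1): Let S and T be standard Borel spaces, let μ^{X,Y} and ν^{X,Y} be probability measures on S×T, with first marginals μ^X, ν^X, second marginals μ^Y, ν^Y, and disintegrations x ↦ μ^{Y|X=x}, x ↦ ν^{Y|X=x}. Let μ^{X'} be a probability measure on S that is absolutely continuous with respect to ν^X, and let q ∈ (0,1). Then R_q(μ^Y ∥ ν^Y) ≤ R_q(μ^{X'} ∥ ν^X) + inf_{γ ∈ C(μ^X, μ^{X'})} γ-esssup_{(x,x')} R_q(μ^{Y|X=x} ∥ ν^{Y|X=x'}). -/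
open MeasureTheory ProbabilityTheory ENNReal Matrix

noncomputable section

namespace SCR

open scoped Classical

variable {Ω S T : Type*} [MeasurableSpace Ω] [MeasurableSpace S] [MeasurableSpace T]

section Aux

variable {q : ℝ}



/-- Hellinger-type integral. -/
def Hb (q : ℝ) (μ ν : Measure Ω) : ℝ≥0∞ :=
  ∫⁻ x, (μ.rnDeriv (μ + ν) x) ^ q * (ν.rnDeriv (μ + ν) x) ^ (1 - q) ∂(μ + ν)

lemma ac_add_left (μ ν : Measure Ω) : μ ≪ μ + ν :=
  Measure.AbsolutelyContinuous.mk fun s _ h0 => by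
    simp only [Measure.coe_add, Pi.add_apply, add_eq_zero] at h0; exact h0.1

lemma ac_add_right (μ ν : Measure Ω) : ν ≪ μ + ν :=
  Measure.AbsolutelyContinuous.mk fun s _ h0 => by
    simp only [Measure.coe_add, Pi.add_apply, add_eq_zero] at h0; exact h0.2

lemma rpow_mul_rpow_self (hq0 : 0 < q) (hq1 : q < 1) (c : ℝ≥0∞) :
    c ^ q * c ^ (1 - q) = c := by
  rcases eq_or_ne c 0 with rfl | hc0
  · rw [ENNReal.zero_rpow_of_pos hq0, zero_mul]
  rcases eq_or_ne c ⊤ with rfl | hct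
  · rw [ENNReal.top_rpow_of_pos hq0, ENNReal.top_rpow_of_pos (by linarith), top_mul_top]
  · rw [← ENNReal.rpow_add _ _ hc0 hct]
    simp

lemma Hb_eq (hq0 : 0 < q) (hq1 : q < 1) {lam μ ν : Measure Ω} [IsFiniteMeasure μ]
    [IsFiniteMeasure ν] [SigmaFinite lam] {f g : Ω → ℝ≥0∞} (hf : Measurable f)
    (hg : Measurable g) (hμ : μ = lam.withDensity f) (hν : ν = lam.withDensity g) :
    Hb q μ ν = ∫⁻ x, f x ^ q * g x ^ (1 - q) ∂lam := by
  have hμl : μ ≪ lam := hμ ▸ withDensity_absolutelyContinuous lam f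
  have hνl : ν ≪ lam := hν ▸ withDensity_absolutelyContinuous lam g
  have hσl : (μ + ν) ≪ lam := by
    refine Measure.AbsolutelyContinuous.mk fun s hs h0 => ?_
    simp [Measure.coe_add, Pi.add_apply, hμl h0, hνl h0]
  have hμσ : μ ≪ μ + ν := ac_add_left μ ν
  have hνσ : ν ≪ μ + ν := ac_add_right μ ν
  have hmeas : Measurable fun x => (μ.rnDeriv (μ + ν) x) ^ q * (ν.rnDeriv (μ + ν) x) ^ (1 - q) :=
    ((Measure.measurable_rnDeriv _ _).pow_const _).mul
      ((Measure.measurable_rnDeriv _ _).pow_const _)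
  have h1 : Hb q μ ν
      = ∫⁻ x, (μ + ν).rnDeriv lam x *
        ((μ.rnDeriv (μ + ν) x) ^ q * (ν.rnDeriv (μ + ν) x) ^ (1 - q)) ∂lam :=
    (lintegral_rnDeriv_mul hσl hmeas.aemeasurable).symm
  rw [h1]
  refine lintegral_congr_ae ?_
  have hμf : μ.rnDeriv lam =ᵐ[lam] f := by
    rw [hμ]; exact Measure.rnDeriv_withDensity lam hf
  have hνg : ν.rnDeriv lam =ᵐ[lam] g := by
    rw [hν]; exact Measure.rnDeriv_withDensity lam hg
  filter_upwards [Measure.rnDeriv_mul_rnDeriv hμσ (κ := lam),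
    Measure.rnDeriv_mul_rnDeriv hνσ (κ := lam), hμf, hνg] with x h2 h3 h4 h5
  have h2' : μ.rnDeriv (μ + ν) x * (μ + ν).rnDeriv lam x = f x := by
    simpa using h2.trans h4
  have h3' : ν.rnDeriv (μ + ν) x * (μ + ν).rnDeriv lam x = g x := by
    simpa using h3.trans h5
  rw [← h2', ← h3']
  rw [ENNReal.mul_rpow_of_nonneg _ _ hq0.le, ENNReal.mul_rpow_of_nonneg _ _ (by linarith : (0:ℝ) ≤ 1 - q)]
  set c := (μ + ν).rnDeriv lam x
  set A := μ.rnDeriv (μ + ν) x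
  set B := ν.rnDeriv (μ + ν) x
  calc c * (A ^ q * B ^ (1 - q)) = (A ^ q * B ^ (1 - q)) * (c ^ q * c ^ (1 - q)) := by
        rw [rpow_mul_rpow_self hq0 hq1, mul_comm]
    _ = A ^ q * c ^ q * (B ^ (1 - q) * c ^ (1 - q)) := by ring

lemma Hb_le_one (hq0 : 0 < q) (hq1 : q < 1) {μ ν : Measure Ω} [IsProbabilityMeasure μ]
    [IsProbabilityMeasure ν] : Hb q μ ν ≤ 1 := by
  have hμσ : μ ≪ μ + ν := ac_add_left μ ν
  have hνσ : ν ≪ μ + ν := ac_add_right μ ν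
  calc Hb q μ ν ≤ (∫⁻ x, μ.rnDeriv (μ + ν) x ∂(μ + ν)) ^ q *
        (∫⁻ x, ν.rnDeriv (μ + ν) x ∂(μ + ν)) ^ (1 - q) :=
      ENNReal.lintegral_mul_norm_pow_le (Measure.measurable_rnDeriv _ _).aemeasurable
        (Measure.measurable_rnDeriv _ _).aemeasurable hq0.le (by linarith) (by ring)
    _ ≤ 1 := by
      rw [Measure.lintegral_rnDeriv hμσ, Measure.lintegral_rnDeriv hνσ]
      simp




lemma withDensity_map_swap {m : Measure (S × T)} {p : S × T → ℝ≥0∞} (hp : Measurable p) :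
    (m.withDensity p).map Prod.swap = (m.map Prod.swap).withDensity (fun z => p z.swap) := by
  ext s hs
  rw [Measure.map_apply measurable_swap hs, withDensity_apply _ (measurable_swap hs),
    withDensity_apply _ hs, Measure.restrict_map measurable_swap hs]
  exact (lintegral_map (hp.comp measurable_swap) measurable_swap).symm

lemma Hb_snd (hq0 : 0 < q) (hq1 : q < 1) [StandardBorelSpace S] [Nonempty S]
    {P Q : Measure (S × T)} [IsFiniteMeasure P] [IsFiniteMeasure Q] :
    Hb q P Q ≤ Hb q P.snd Q.snd := by
  set σ : Measure (S × T) := P + Q with hσ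
  have hPσ : P ≪ σ := ac_add_left P Q
  have hQσ : Q ≪ σ := ac_add_right P Q
  set p : S × T → ℝ≥0∞ := P.rnDeriv σ with hpdef
  set r : S × T → ℝ≥0∞ := Q.rnDeriv σ with hrdef
  have hp : Measurable p := Measure.measurable_rnDeriv _ _
  have hr : Measurable r := Measure.measurable_rnDeriv _ _
  have hPd : P = σ.withDensity p := (Measure.withDensity_rnDeriv_eq _ _ hPσ).symm
  have hQd : Q = σ.withDensity r := (Measure.withDensity_rnDeriv_eq _ _ hQσ).symm
  set σ' : Measure (T × S) := σ.map Prod.swap with hσ'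
  haveI : IsFiniteMeasure σ' := by
    constructor
    rw [hσ', Measure.map_apply measurable_swap MeasurableSet.univ]
    exact measure_lt_top σ _
  set ξ := σ'.condKernel with hξ
  have hdis : σ'.fst ⊗ₘ ξ = σ' := Measure.IsCondKernel.disintegrate
  have hfst : σ'.fst = σ.snd := Measure.fst_map_swap
  set p' : T × S → ℝ≥0∞ := fun z => p z.swap with hp'def
  set r' : T × S → ℝ≥0∞ := fun z => r z.swap with hr'def
  have hp' : Measurable p' := hp.comp measurable_swap
  have hr' : Measurable r' := hr.comp measurable_swap
  have hP' : P.map Prod.swap = σ'.withDensity p' := by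
    rw [hPd, withDensity_map_swap hp]
  have hQ' : Q.map Prod.swap = σ'.withDensity r' := by
    rw [hQd, withDensity_map_swap hr]
  set pm : T → ℝ≥0∞ := fun y => ∫⁻ x, p' (y, x) ∂ξ y with hpmdef
  set rm : T → ℝ≥0∞ := fun y => ∫⁻ x, r' (y, x) ∂ξ y with hrmdef
  have hpm : Measurable pm := Measurable.lintegral_kernel_prod_right hp'
  have hrm : Measurable rm := Measurable.lintegral_kernel_prod_right hr'
  have key : ∀ (R : Measure (S × T)), R.map Prod.swap = σ'.withDensity (fun z => R.rnDeriv σ z.swap) →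
      R.snd = σ.snd.withDensity (fun y => ∫⁻ x, R.rnDeriv σ (x, y) ∂ξ y) := by
    intro R hR'
    have hRd : Measurable (fun z : T × S => R.rnDeriv σ z.swap) :=
      (Measure.measurable_rnDeriv _ _).comp measurable_swap
    ext B hB
    have h1 : R.snd B = (R.map Prod.swap) (Prod.fst ⁻¹' B) := by
      rw [Measure.map_apply measurable_swap (measurable_fst hB), Measure.snd_apply hB]
      rfl
    rw [h1, hR', withDensity_apply _ (measurable_fst hB)]
    have h2 : Prod.fst ⁻¹' B = B ×ˢ (Set.univ : Set S) := by
      ext z; simp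
    rw [h2, ← hdis, Measure.setLIntegral_compProd hRd hB MeasurableSet.univ]
    rw [withDensity_apply _ hB, hfst]
    refine setLIntegral_congr_fun hB (fun y _ => ?_)
    rw [Measure.restrict_univ]
    rfl
  have hPsnd : P.snd = σ.snd.withDensity pm := key P hP'
  have hQsnd : Q.snd = σ.snd.withDensity rm := key Q hQ'
  have hfin1 : IsFiniteMeasure P.snd := by rw [Measure.snd]; infer_instance
  have hfin2 : IsFiniteMeasure Q.snd := by rw [Measure.snd]; infer_instance
  calc Hb q P Q = ∫⁻ z, p z ^ q * r z ^ (1 - q) ∂σ := Hb_eq hq0 hq1 hp hr hPd hQd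
    _ = ∫⁻ w, p' w ^ q * r' w ^ (1 - q) ∂σ' := by
        rw [hσ', lintegral_map (f := fun w => p' w ^ q * r' w ^ (1 - q))
          ((hp'.pow_const _).mul (hr'.pow_const _)) measurable_swap]
        rfl
    _ = ∫⁻ y, ∫⁻ x, p' (y, x) ^ q * r' (y, x) ^ (1 - q) ∂ξ y ∂σ'.fst := by
        conv_lhs => rw [← hdis]
        exact Measure.lintegral_compProd ((hp'.pow_const _).mul (hr'.pow_const _))
    _ ≤ ∫⁻ y, pm y ^ q * rm y ^ (1 - q) ∂σ'.fst := by
        refine lintegral_mono fun y => ?_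
        exact ENNReal.lintegral_mul_norm_pow_le
          (hp'.comp measurable_prodMk_left).aemeasurable
          (hr'.comp measurable_prodMk_left).aemeasurable hq0.le (by linarith) (by ring)
    _ = Hb q P.snd Q.snd := by
        rw [hfst]; exact (Hb_eq hq0 hq1 hpm hrm hPsnd hQsnd).symm




lemma compProd_withDensity [MeasurableSpace.CountablyGenerated T] {lam : Measure S}
    [IsFiniteMeasure lam] {a : S → ℝ≥0∞} (ha : Measurable a)
    (κ' Ξ : Kernel S T) [IsFiniteKernel κ'] [IsFiniteKernel Ξ] (hle : ∀ x, κ' x ≪ Ξ x) :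
    lam.withDensity a ⊗ₘ κ' =
      (lam ⊗ₘ Ξ).withDensity (fun z => a z.1 * Kernel.rnDeriv κ' Ξ z.1 z.2) := by
  have hF : Measurable fun z : S × T => a z.1 * Kernel.rnDeriv κ' Ξ z.1 z.2 :=
    (ha.comp measurable_fst).mul (Kernel.measurable_rnDeriv κ' Ξ)
  ext s hs
  rw [Measure.compProd_apply hs,
    lintegral_withDensity_eq_lintegral_mul lam ha (Kernel.measurable_kernel_prodMk_left hs),
    withDensity_apply _ hs, ← lintegral_indicator hs,
    Measure.lintegral_compProd (hF.indicator hs)]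
  refine lintegral_congr fun x => ?_
  have hx : ∀ y : T, s.indicator (fun z : S × T => a z.1 * Kernel.rnDeriv κ' Ξ z.1 z.2) (x, y)
      = a x * (Prod.mk x ⁻¹' s).indicator (fun y => Kernel.rnDeriv κ' Ξ x y) y := by
    intro y
    by_cases hy : (x, y) ∈ s
    · rw [Set.indicator_of_mem hy, Set.indicator_of_mem (by exact hy)]
    · rw [Set.indicator_of_notMem hy, Set.indicator_of_notMem (by exact hy), mul_zero]
  simp_rw [hx]
  rw [lintegral_const_mul _ ((Kernel.measurable_rnDeriv_right κ' Ξ x).indicator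
      (measurable_prodMk_left hs)),
    lintegral_indicator (measurable_prodMk_left hs)]
  simp only [Pi.mul_apply]
  congr 1
  symm
  calc ∫⁻ y in Prod.mk x ⁻¹' s, Kernel.rnDeriv κ' Ξ x y ∂Ξ x
      = ∫⁻ y in Prod.mk x ⁻¹' s, (κ' x).rnDeriv (Ξ x) y ∂Ξ x := by
        refine lintegral_congr_ae (ae_restrict_of_ae ?_)
        exact Kernel.rnDeriv_eq_rnDeriv_measure
    _ = κ' x (Prod.mk x ⁻¹' s) := Measure.setLIntegral_rnDeriv' (hle x) (measurable_prodMk_left hs)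

lemma Hb_compProd (hq0 : 0 < q) (hq1 : q < 1) [MeasurableSpace.CountablyGenerated T]
    {lam : Measure S} [IsFiniteMeasure lam] {a b : S → ℝ≥0∞}
    (ha : Measurable a) (hb : Measurable b)
    [IsFiniteMeasure (lam.withDensity a)] [IsFiniteMeasure (lam.withDensity b)]
    (κ' η : Kernel S T) [IsFiniteKernel κ'] [IsFiniteKernel η] :
    Hb q (lam.withDensity a ⊗ₘ κ') (lam.withDensity b ⊗ₘ η)
      = ∫⁻ x, a x ^ q * b x ^ (1 - q) * Hb q (κ' x) (η x) ∂lam := by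
  set Ξ : Kernel S T := κ' + η with hΞ
  have hκΞ : ∀ x, κ' x ≪ Ξ x := fun x => by rw [hΞ, Kernel.add_apply]; exact ac_add_left _ _
  have hηΞ : ∀ x, η x ≪ Ξ x := fun x => by rw [hΞ, Kernel.add_apply]; exact ac_add_right _ _
  set F : S × T → ℝ≥0∞ := fun z => a z.1 * Kernel.rnDeriv κ' Ξ z.1 z.2 with hFdef
  set G : S × T → ℝ≥0∞ := fun z => b z.1 * Kernel.rnDeriv η Ξ z.1 z.2 with hGdef
  have hF : Measurable F := (ha.comp measurable_fst).mul (Kernel.measurable_rnDeriv κ' Ξ)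
  have hG : Measurable G := (hb.comp measurable_fst).mul (Kernel.measurable_rnDeriv η Ξ)
  have h1 : lam.withDensity a ⊗ₘ κ' = (lam ⊗ₘ Ξ).withDensity F :=
    compProd_withDensity ha κ' Ξ hκΞ
  have h2 : lam.withDensity b ⊗ₘ η = (lam ⊗ₘ Ξ).withDensity G :=
    compProd_withDensity hb η Ξ hηΞ
  rw [Hb_eq hq0 hq1 hF hG h1 h2,
    Measure.lintegral_compProd (f := fun z => F z ^ q * G z ^ (1 - q))
      ((hF.pow_const _).mul (hG.pow_const _))]
  refine lintegral_congr fun x => ?_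
  have hpt : ∀ y : T, F (x, y) ^ q * G (x, y) ^ (1 - q)
      = a x ^ q * b x ^ (1 - q) *
        (Kernel.rnDeriv κ' Ξ x y ^ q * Kernel.rnDeriv η Ξ x y ^ (1 - q)) := by
    intro y
    rw [hFdef, hGdef]
    simp only []
    rw [ENNReal.mul_rpow_of_nonneg _ _ hq0.le,
      ENNReal.mul_rpow_of_nonneg _ _ (by linarith : (0:ℝ) ≤ 1 - q)]
    ring
  simp_rw [hpt]
  rw [lintegral_const_mul _ (f := fun y => Kernel.rnDeriv κ' Ξ x y ^ q * Kernel.rnDeriv η Ξ x y ^ (1 - q))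
    (((Kernel.measurable_rnDeriv_right κ' Ξ x).pow_const _).mul
    ((Kernel.measurable_rnDeriv_right η Ξ x).pow_const _))]
  congr 1
  have hΞx : Ξ x = κ' x + η x := by rw [hΞ, Kernel.add_apply]
  rw [Hb]
  rw [← hΞx]
  refine lintegral_congr_ae ?_
  filter_upwards [Kernel.rnDeriv_eq_rnDeriv_measure (κ := κ') (η := Ξ) (a := x),
    Kernel.rnDeriv_eq_rnDeriv_measure (κ := η) (η := Ξ) (a := x)] with y hy1 hy2
  rw [hy1, hy2, hΞx]




lemma renyiDiv_of_ne_one (hq : q ≠ 1) (μ ν : Measure Ω) :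
    renyiDiv q μ ν = erealToENNReal ((((q - 1)⁻¹ : ℝ) : EReal) * ENNReal.log (Hb q μ ν)) :=
  if_neg hq

lemma inv_q_sub_one_neg (hq1 : q < 1) : (q - 1)⁻¹ < 0 :=
  inv_lt_zero.mpr (by linarith)

lemma renyiDiv_eq_top (hq1 : q < 1) {μ ν : Measure Ω} (h : Hb q μ ν = 0) :
    renyiDiv q μ ν = ⊤ := by
  rw [renyiDiv_of_ne_one hq1.ne, h, ENNReal.log_zero,
    EReal.coe_mul_bot_of_neg (inv_q_sub_one_neg hq1)]
  simp [erealToENNReal]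

lemma renyiDiv_eq_ofReal (hq1 : q < 1) {μ ν : Measure Ω} (h0 : Hb q μ ν ≠ 0)
    (ht : Hb q μ ν ≠ ⊤) :
    renyiDiv q μ ν = ENNReal.ofReal ((q - 1)⁻¹ * Real.log (Hb q μ ν).toReal) := by
  rw [renyiDiv_of_ne_one hq1.ne]
  have hlog : ENNReal.log (Hb q μ ν) = ((Real.log (Hb q μ ν).toReal : ℝ) : EReal) := by
    simp [ENNReal.log, h0, ht]
  rw [hlog, ← EReal.coe_mul, erealToENNReal, if_neg (EReal.coe_ne_top _), EReal.toReal_coe]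

lemma Hb_ge_of_renyi_le (hq0 : 0 < q) (hq1 : q < 1) {μ ν : Measure Ω}
    [IsProbabilityMeasure μ] [IsProbabilityMeasure ν] {R : ℝ≥0∞} (hR : R ≠ ⊤)
    (h : renyiDiv q μ ν ≤ R) :
    ENNReal.ofReal (Real.exp ((q - 1) * R.toReal)) ≤ Hb q μ ν := by
  have hle1 : Hb q μ ν ≤ 1 := Hb_le_one hq0 hq1
  have hne : Hb q μ ν ≠ ⊤ := (hle1.trans_lt one_lt_top).ne
  have h0 : Hb q μ ν ≠ 0 := by
    intro h0
    rw [renyiDiv_eq_top hq1 h0] at h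
    exact hR (top_le_iff.mp h)
  rw [renyiDiv_eq_ofReal hq1 h0 hne] at h
  have htR : (q - 1)⁻¹ * Real.log (Hb q μ ν).toReal ≤ R.toReal :=
    (ENNReal.ofReal_le_iff_le_toReal hR).mp h
  have hq1' : q - 1 < 0 := by linarith
  have hlog : (q - 1) * R.toReal ≤ Real.log (Hb q μ ν).toReal := by
    have := mul_le_mul_of_nonpos_left htR hq1'.le
    rwa [← mul_assoc, mul_inv_cancel₀ (by linarith : q - 1 ≠ 0), one_mul] at this
  have hpos : 0 < (Hb q μ ν).toReal := ENNReal.toReal_pos h0 hne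
  have : Real.exp ((q - 1) * R.toReal) ≤ (Hb q μ ν).toReal := by
    calc Real.exp ((q - 1) * R.toReal) ≤ Real.exp (Real.log (Hb q μ ν).toReal) :=
          Real.exp_le_exp.mpr hlog
      _ = (Hb q μ ν).toReal := Real.exp_log hpos
  calc ENNReal.ofReal (Real.exp ((q - 1) * R.toReal)) ≤ ENNReal.ofReal (Hb q μ ν).toReal :=
        ENNReal.ofReal_le_ofReal this
    _ = Hb q μ ν := ENNReal.ofReal_toReal hne

lemma ae_map_equiv {α β : Type*} [MeasurableSpace α] [MeasurableSpace β] {μ : Measure α}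
    (e : α ≃ᵐ β) {p : β → Prop} (h : ∀ᵐ x ∂μ, p (e x)) : ∀ᵐ y ∂(μ.map e), p y := by
  rw [ae_iff, MeasurableEquiv.map_apply]
  simpa [ae_iff] using h

lemma le_Hb_bind (hq0 : 0 < q) (hq1 : q < 1) [StandardBorelSpace S] [Nonempty S]
    [MeasurableSpace.CountablyGenerated T] {ρ : Measure S} [IsProbabilityMeasure ρ]
    (κ : Kernel S T) [IsMarkovKernel κ] (ν0 : Measure T) [IsProbabilityMeasure ν0]
    {c : ℝ≥0∞} (h : ∀ᵐ x ∂ρ, c ≤ Hb q (κ x) ν0) :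
    c ≤ Hb q (ρ.bind ⇑κ) ν0 := by
  have hwd : ρ.withDensity (1 : S → ℝ≥0∞) = ρ := withDensity_one
  haveI : IsFiniteMeasure (ρ.withDensity (1 : S → ℝ≥0∞)) := by rw [hwd]; infer_instance
  have hsnd1 : (ρ ⊗ₘ κ).snd = ρ.bind ⇑κ := by
    ext B hB
    rw [Measure.snd_apply hB, Measure.compProd_apply (measurable_snd hB),
      Measure.bind_apply hB (Kernel.measurable κ).aemeasurable]
    rfl
  have hsnd2 : (ρ ⊗ₘ Kernel.const S ν0).snd = ν0 := by
    ext B hB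
    rw [Measure.snd_apply hB, Measure.compProd_apply (measurable_snd hB)]
    have hset : ∀ a : S, Prod.mk a ⁻¹' (Prod.snd ⁻¹' B) = B := fun _ => rfl
    simp_rw [Kernel.const_apply, hset, lintegral_const, measure_univ, mul_one]
  calc c = ∫⁻ _, c ∂ρ := by rw [lintegral_const, measure_univ, mul_one]
    _ ≤ ∫⁻ x, (1:ℝ≥0∞) ^ q * (1:ℝ≥0∞) ^ (1 - q) * Hb q (κ x) ν0 ∂ρ := by
        refine lintegral_mono_ae (h.mono fun x hx => ?_)
        simpa using hx
    _ = Hb q (ρ.withDensity (1 : S → ℝ≥0∞) ⊗ₘ κ)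
          (ρ.withDensity (1 : S → ℝ≥0∞) ⊗ₘ Kernel.const S ν0) := by
        rw [Hb_compProd hq0 hq1 measurable_one measurable_one κ (Kernel.const S ν0)]
        simp
    _ ≤ Hb q (ρ.withDensity (1 : S → ℝ≥0∞) ⊗ₘ κ).snd
          (ρ.withDensity (1 : S → ℝ≥0∞) ⊗ₘ Kernel.const S ν0).snd := by
        rw [hwd]
        exact Hb_snd hq0 hq1
    _ = Hb q (ρ.bind ⇑κ) ν0 := by rw [hwd, hsnd1, hsnd2]





end Aux

/-- **Shifted composition rule for Rényi divergences of order `q ∈ (0, 1)`.** -/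
theorem shifted_composition_rule_renyi_lt_one [StandardBorelSpace S] [StandardBorelSpace T]
    (μXY νXY : Measure (S × T)) [IsProbabilityMeasure μXY] [IsProbabilityMeasure νXY]
    (κ η : Kernel S T) [IsMarkovKernel κ] [IsMarkovKernel η]
    (hκ : μXY = μXY.fst ⊗ₘ κ) (hη : νXY = νXY.fst ⊗ₘ η)
    (μX' : Measure S) [IsProbabilityMeasure μX'] (hac : μX' ≪ νXY.fst)
    (q : ℝ) (hq0 : 0 < q) (hq1 : q < 1) :
    renyiDiv q μXY.snd νXY.snd ≤
      renyiDiv q μX' νXY.fst +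
        ⨅ γ ∈ {γ : Measure (S × S) | IsCoupling γ μXY.fst μX'},
          essSup (fun p => renyiDiv q (κ p.1) (η p.2)) γ := by
  have hne : Nonempty (S × T) := by
    by_contra h
    rw [not_nonempty_iff] at h
    have h1 := measure_univ (μ := μXY)
    rw [Set.univ_eq_empty_iff.mpr h, measure_empty] at h1
    exact zero_ne_one h1
  haveI : Nonempty S := ⟨hne.some.1⟩
  haveI : Nonempty T := ⟨hne.some.2⟩
  rw [ENNReal.add_iInf]
  refine le_iInf fun γ => ?_
  rw [ENNReal.add_iInf]
  refine le_iInf fun hγ => ?_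
  obtain ⟨hγ1, hγ2⟩ := hγ
  set R1 := renyiDiv q μX' νXY.fst with hR1def
  set R2 := essSup (fun p : S × S => renyiDiv q (κ p.1) (η p.2)) γ with hR2def
  by_cases hR1 : R1 = ⊤
  · rw [hR1]; simp
  by_cases hR2 : R2 = ⊤
  · rw [hR2]; simp
  -- setup
  haveI : IsProbabilityMeasure γ := by
    constructor
    rw [← Measure.fst_univ, hγ1]
    exact measure_univ
  set e : (S × S) ≃ᵐ (S × S) := MeasurableEquiv.prodComm (α := S) (β := S) with hedef
  have hecoe : ⇑e = Prod.swap := rfl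
  set γ' : Measure (S × S) := γ.map Prod.swap with hγ'def
  haveI : IsProbabilityMeasure γ' := Measure.isProbabilityMeasure_map measurable_swap.aemeasurable
  have hγ'fst : γ'.fst = μX' := by rw [hγ'def, Measure.fst_map_swap, hγ2]
  set ρc := γ'.condKernel with hρcdef
  have hdis : μX' ⊗ₘ ρc = γ' := by rw [← hγ'fst]; exact Measure.IsCondKernel.disintegrate
  set K : Kernel S T := κ ∘ₖ ρc with hKdef
  -- marginal identity
  have hsnd : (μX' ⊗ₘ K).snd = μXY.snd := by
    ext B hB
    rw [Measure.snd_apply hB, Measure.compProd_apply (measurable_snd hB)]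
    have hKm : ∀ x' : S, K x' (Prod.mk x' ⁻¹' (Prod.snd ⁻¹' B)) = ∫⁻ x, κ x B ∂ρc x' :=
      fun x' => Kernel.comp_apply' κ ρc x' hB
    calc ∫⁻ x', K x' (Prod.mk x' ⁻¹' (Prod.snd ⁻¹' B)) ∂μX'
        = ∫⁻ x', ∫⁻ x, κ x B ∂ρc x' ∂μX' := lintegral_congr hKm
      _ = ∫⁻ w : S × S, κ w.2 B ∂γ' := by
          rw [← hdis]
          exact (Measure.lintegral_compProd ((Kernel.measurable_coe κ hB).comp
            measurable_snd)).symm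
      _ = ∫⁻ p : S × S, κ p.1 B ∂γ := by
          rw [hγ'def]
          exact lintegral_map ((Kernel.measurable_coe κ hB).comp measurable_snd)
            measurable_swap
      _ = ∫⁻ x, κ x B ∂μXY.fst := by
          rw [← hγ1, Measure.fst]
          exact (lintegral_map (Kernel.measurable_coe κ hB) measurable_fst).symm
      _ = μXY.snd B := by
          rw [Measure.snd_apply hB]
          conv_rhs => rw [hκ]
          rw [Measure.compProd_apply (measurable_snd hB)]
          rfl
  -- densities
  set a : S → ℝ≥0∞ := μX'.rnDeriv νXY.fst with hadef
  have ha : Measurable a := Measure.measurable_rnDeriv _ _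
  have hμX' : μX' = νXY.fst.withDensity a := (Measure.withDensity_rnDeriv_eq _ _ hac).symm
  have hνX : νXY.fst = νXY.fst.withDensity (1 : S → ℝ≥0∞) := withDensity_one.symm
  haveI : IsFiniteMeasure (νXY.fst.withDensity a) := by rw [← hμX']; infer_instance
  haveI : IsFiniteMeasure (νXY.fst.withDensity (1 : S → ℝ≥0∞)) := by
    rw [← hνX]; infer_instance
  set E2 : ℝ≥0∞ := ENNReal.ofReal (Real.exp ((q - 1) * R2.toReal)) with hE2def
  -- a.e. kernel bound
  have hae : ∀ᵐ p ∂γ, renyiDiv q (κ p.1) (η p.2) ≤ R2 := ENNReal.ae_le_essSup _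
  have haeH : ∀ᵐ p ∂γ, E2 ≤ Hb q (κ p.1) (η p.2) :=
    hae.mono fun p hp => Hb_ge_of_renyi_le hq0 hq1 hR2 hp
  have haeH' : ∀ᵐ w ∂γ', E2 ≤ Hb q (κ w.2) (η w.1) := by
    rw [hγ'def, ← hecoe]
    exact ae_map_equiv e haeH
  have haeH2 : ∀ᵐ x' ∂μX', ∀ᵐ x ∂ρc x', E2 ≤ Hb q (κ x) (η x') := by
    rw [← hdis] at haeH'
    exact Measure.ae_ae_of_ae_compProd haeH'
  have hKbd : ∀ᵐ x' ∂μX', E2 ≤ Hb q (K x') (η x') := by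
    refine haeH2.mono fun x' hx' => ?_
    have h1 : E2 ≤ Hb q ((ρc x').bind ⇑κ) (η x') := le_Hb_bind hq0 hq1 κ (η x') hx'
    rwa [← Kernel.comp_apply] at h1
  -- main chain
  set H1 := Hb q μX' νXY.fst with hH1def
  have hH1eq : H1 = ∫⁻ x, a x ^ q * (1 : ℝ≥0∞) ^ (1 - q) ∂νXY.fst :=
    Hb_eq hq0 hq1 ha measurable_one hμX' hνX
  have hchain : E2 * H1 ≤ Hb q μXY.snd νXY.snd := by
    have hKbd' : ∀ᵐ x ∂νXY.fst, a x ≠ 0 → E2 ≤ Hb q (K x) (η x) := by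
      rw [hμX', ae_withDensity_iff ha] at hKbd
      exact hKbd
    calc E2 * H1 = ∫⁻ x, E2 * (a x ^ q * (1 : ℝ≥0∞) ^ (1 - q)) ∂νXY.fst := by
          rw [hH1eq, lintegral_const_mul E2 (f := fun x => a x ^ q * (1 : ℝ≥0∞) ^ (1 - q))
            ((ha.pow_const _).mul measurable_const)]
      _ ≤ ∫⁻ x, a x ^ q * (1 : ℝ≥0∞) ^ (1 - q) * Hb q (K x) (η x) ∂νXY.fst := by
          refine lintegral_mono_ae (hKbd'.mono fun x hx => ?_)
          rcases eq_or_ne (a x) 0 with h0 | h0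
          · simp [h0, ENNReal.zero_rpow_of_pos hq0]
          · calc E2 * (a x ^ q * 1 ^ (1 - q)) = a x ^ q * 1 ^ (1 - q) * E2 := mul_comm _ _
              _ ≤ a x ^ q * 1 ^ (1 - q) * Hb q (K x) (η x) := mul_le_mul_right (hx h0) _
      _ = Hb q (νXY.fst.withDensity a ⊗ₘ K) (νXY.fst.withDensity (1 : S → ℝ≥0∞) ⊗ₘ η) :=
          (Hb_compProd hq0 hq1 ha measurable_one K η).symm
      _ = Hb q (μX' ⊗ₘ K) (νXY.fst ⊗ₘ η) := by rw [← hμX', ← hνX]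
      _ ≤ Hb q (μX' ⊗ₘ K).snd (νXY.fst ⊗ₘ η).snd := Hb_snd hq0 hq1
      _ = Hb q μXY.snd νXY.snd := by rw [hsnd, ← hη]
  -- numeric conclusion
  set Hy := Hb q μXY.snd νXY.snd with hHydef
  have hH1le : H1 ≤ 1 := Hb_le_one hq0 hq1
  have hHyle : Hy ≤ 1 := Hb_le_one hq0 hq1
  have hH1t : H1 ≠ ⊤ := (hH1le.trans_lt one_lt_top).ne
  have hHyt : Hy ≠ ⊤ := (hHyle.trans_lt one_lt_top).ne
  have hH1ne : H1 ≠ 0 := fun h => hR1 (renyiDiv_eq_top hq1 h)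
  have hE2ne : E2 ≠ 0 := by
    rw [hE2def]
    simp [Real.exp_pos]
  have hHy0 : Hy ≠ 0 := by
    intro h
    rw [h] at hchain
    exact (mul_ne_zero hE2ne hH1ne) (le_antisymm hchain (by simp)) 
  rw [renyiDiv_eq_ofReal hq1 hHy0 hHyt]
  have hR1eq : R1 = ENNReal.ofReal ((q - 1)⁻¹ * Real.log H1.toReal) :=
    renyiDiv_eq_ofReal hq1 hH1ne hH1t
  have hq1' : q - 1 < 0 := by linarith
  have hH1pos : 0 < H1.toReal := ENNReal.toReal_pos hH1ne hH1t
  have hkey : (q - 1)⁻¹ * Real.log Hy.toReal ≤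
      ((q - 1)⁻¹ * Real.log H1.toReal) + R2.toReal := by
    have h1 : Real.exp ((q - 1) * R2.toReal) * H1.toReal ≤ Hy.toReal := by
      have := ENNReal.toReal_mono hHyt hchain
      rwa [ENNReal.toReal_mul, hE2def, ENNReal.toReal_ofReal (Real.exp_pos _).le] at this
    have h2 : (q - 1) * R2.toReal + Real.log H1.toReal ≤ Real.log Hy.toReal := by
      have hlt : 0 < Real.exp ((q - 1) * R2.toReal) * H1.toReal :=
        mul_pos (Real.exp_pos _) hH1pos
      calc (q - 1) * R2.toReal + Real.log H1.toReal
          = Real.log (Real.exp ((q - 1) * R2.toReal) * H1.toReal) := by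
            rw [Real.log_mul (Real.exp_pos _).ne' hH1pos.ne', Real.log_exp]
        _ ≤ Real.log Hy.toReal := Real.log_le_log hlt h1
    have h3 := mul_le_mul_of_nonpos_left h2 (inv_q_sub_one_neg hq1).le
    rw [mul_add, ← mul_assoc, inv_mul_cancel₀ (by linarith : q - 1 ≠ 0), one_mul] at h3
    linarith
  calc ENNReal.ofReal ((q - 1)⁻¹ * Real.log Hy.toReal)
      ≤ ENNReal.ofReal (((q - 1)⁻¹ * Real.log H1.toReal) + R2.toReal) :=
        ENNReal.ofReal_le_ofReal hkey
    _ ≤ ENNReal.ofReal ((q - 1)⁻¹ * Real.log H1.toReal) + ENNReal.ofReal R2.toReal :=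
        ENNReal.ofReal_add_le
    _ = R1 + R2 := by rw [← hR1eq, ENNReal.ofReal_toReal hR2]


end SCR
end
end

section
/- Rényi composition rule for q ∈ (1,∞): Let S and T be standard Borel spaces and let μ^{X,Y}, ν^{X,Y} be probability measures on S×T with first marginals μ^X, ν^X and disintegrations x ↦ μ^{Y|X=x}, x ↦ ν^{Y|X=x}. Then for every q ∈ (1,∞), R_q(μ^{X,Y} ∥ ν^{X,Y}) ≤ R_q(μ^X ∥ ν^X) + μ^X-esssup_{x} R_q(μ^{Y|X=x} ∥ ν^{Y|X=x}). -/
open MeasureTheory ProbabilityTheory ENNReal Matrix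

noncomputable section

namespace SCR

open scoped Classical

variable {Ω S T : Type*} [MeasurableSpace Ω] [MeasurableSpace S] [MeasurableSpace T]

section Helpers

variable {μ ν : Measure Ω} {q : ℝ}

lemma hellinger_of_ac [IsFiniteMeasure μ] [IsFiniteMeasure ν] (hq : 1 < q) (h : μ ≪ ν) :
    ∫⁻ x, (μ.rnDeriv (μ + ν) x) ^ q * (ν.rnDeriv (μ + ν) x) ^ (1 - q) ∂(μ + ν)
      = ∫⁻ x, (μ.rnDeriv ν x) ^ q ∂ν := by
  have hν : ν ≪ μ + ν := Measure.absolutelyContinuous_of_le (Measure.le_add_left le_rfl)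
  have h1 : (fun x => (μ.rnDeriv (μ + ν) x) ^ q * (ν.rnDeriv (μ + ν) x) ^ (1 - q))
      =ᵐ[μ + ν] fun x => ν.rnDeriv (μ + ν) x * (μ.rnDeriv ν x) ^ q := by
    filter_upwards [Measure.rnDeriv_mul_rnDeriv (κ := μ + ν) h, Measure.rnDeriv_lt_top ν (μ + ν)]
      with x hx hxt
    rw [← hx]
    simp only [Pi.mul_apply]
    by_cases h0 : ν.rnDeriv (μ + ν) x = 0
    · rw [h0, mul_zero, ENNReal.zero_rpow_of_pos (by linarith), zero_mul, zero_mul]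
    · rw [ENNReal.mul_rpow_of_nonneg _ _ (by linarith), mul_assoc,
        ← ENNReal.rpow_add q (1 - q) h0 hxt.ne, show q + (1 - q) = 1 by ring,
        ENNReal.rpow_one, mul_comm]
  rw [lintegral_congr_ae h1]
  exact lintegral_rnDeriv_mul hν ((μ.measurable_rnDeriv ν).pow_const q).aemeasurable

lemma hellinger_of_not_ac [IsFiniteMeasure μ] [IsFiniteMeasure ν] (hq : 1 < q) (h : ¬ μ ≪ ν) :
    ∫⁻ x, (μ.rnDeriv (μ + ν) x) ^ q * (ν.rnDeriv (μ + ν) x) ^ (1 - q) ∂(μ + ν) = ⊤ := by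
  set N := {x | ν.rnDeriv (μ + ν) x = 0} with hNdef
  have hNm : MeasurableSet N := (ν.measurable_rnDeriv (μ + ν)) (measurableSet_singleton 0)
  have hν : ν ≪ μ + ν := Measure.absolutelyContinuous_of_le (Measure.le_add_left le_rfl)
  have hNpos : (μ + ν) N ≠ 0 := by
    intro h0
    refine h (Measure.AbsolutelyContinuous.mk fun A hA hA0 => ?_)
    have hint : ∫⁻ x in A, ν.rnDeriv (μ + ν) x ∂(μ + ν) = 0 := by
      rw [Measure.setLIntegral_rnDeriv hν]
      exact hA0
    have hae : ν.rnDeriv (μ + ν) =ᵐ[(μ + ν).restrict A] 0 :=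
      (lintegral_eq_zero_iff (ν.measurable_rnDeriv _)).mp hint
    have hAN : (μ + ν) (Nᶜ ∩ A) = 0 := by
      have := hae
      rw [Filter.EventuallyEq, ae_iff, Measure.restrict_apply₀'] at this
      · refine measure_mono_null (fun x hx => ?_) this
        exact ⟨fun hx0 => hx.1 hx0, hx.2⟩
      · exact hA.nullMeasurableSet
    have : μ A ≤ (μ + ν) (N ∩ A) + (μ + ν) (Nᶜ ∩ A) := by
      refine le_trans ?_ (measure_union_le _ _)
      have : A ⊆ N ∩ A ∪ Nᶜ ∩ A := by
        intro x hx
        by_cases hxN : x ∈ N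
        · exact Or.inl ⟨hxN, hx⟩
        · exact Or.inr ⟨hxN, hx⟩
      exact le_trans (measure_mono this) (Measure.le_add_right le_rfl _)
    rw [hAN, add_zero] at this
    exact le_antisymm (le_trans this (le_trans (measure_mono Set.inter_subset_left)
      (le_of_eq h0))) zero_le
  have hone : ∀ᵐ x ∂(μ + ν), μ.rnDeriv (μ + ν) x + ν.rnDeriv (μ + ν) x = 1 := by
    filter_upwards [Measure.rnDeriv_add μ ν (μ + ν), Measure.rnDeriv_self (μ + ν)]
      with x hx hx1
    rw [← hx1, hx, Pi.add_apply]
  have htop : ∀ᵐ x ∂(μ + ν).restrict N,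
      (μ.rnDeriv (μ + ν) x) ^ q * (ν.rnDeriv (μ + ν) x) ^ (1 - q) = ⊤ := by
    filter_upwards [ae_restrict_of_ae hone, ae_restrict_mem hNm] with x hx hxN
    have h0 : ν.rnDeriv (μ + ν) x = 0 := hxN
    have h1 : μ.rnDeriv (μ + ν) x = 1 := by rw [h0, add_zero] at hx; exact hx
    rw [h0, h1, ENNReal.one_rpow, one_mul, ENNReal.zero_rpow_of_neg (by linarith)]
  refine top_le_iff.mp ?_
  calc (⊤ : ℝ≥0∞) = ∫⁻ x in N, ⊤ ∂(μ + ν) := by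
        rw [setLIntegral_const, ENNReal.top_mul hNpos]
    _ = ∫⁻ x in N, (μ.rnDeriv (μ + ν) x) ^ q * (ν.rnDeriv (μ + ν) x) ^ (1 - q) ∂(μ + ν) :=
        (lintegral_congr_ae htop).symm
    _ ≤ _ := setLIntegral_le_lintegral _ _

lemma ac_of_renyiDiv_ne_top [IsFiniteMeasure μ] [IsFiniteMeasure ν] (hq : 1 < q)
    (h : renyiDiv q μ ν ≠ ⊤) : μ ≪ ν := by
  by_contra hac
  apply h
  rw [renyiDiv, if_neg hq.ne', hellinger_of_not_ac hq hac, ENNReal.log_top,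
    EReal.coe_mul_top_of_pos (inv_pos.mpr (by linarith) : (0:ℝ) < (q - 1)⁻¹), erealToENNReal, if_pos rfl]

lemma erealToENNReal_mono {x y : EReal} (h : x ≤ y) :
    erealToENNReal x ≤ erealToENNReal y := by
  rcases eq_or_ne y ⊤ with rfl | hy
  · simp [erealToENNReal]
  rw [erealToENNReal, erealToENNReal, if_neg hy,
    if_neg (fun hx => hy (top_le_iff.mp ((le_of_eq hx.symm).trans h)))]
  rcases eq_or_ne x ⊥ with rfl | hx
  · simp
  · exact ENNReal.ofReal_le_ofReal (EReal.toReal_le_toReal h hx hy)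

lemma hellinger_le_of_renyi_le (hq : 1 < q) {h : ℝ≥0∞} {m : ℝ} (hm : 0 ≤ m)
    (hle : erealToENNReal ((((q - 1)⁻¹ : ℝ) : EReal) * ENNReal.log h) ≤ ENNReal.ofReal m) :
    h ≤ ENNReal.ofReal (Real.exp ((q - 1) * m)) := by
  have hc : (0:ℝ) < (q - 1)⁻¹ := inv_pos.mpr (by linarith)
  rcases eq_or_ne h ⊤ with rfl | htop
  · exfalso
    rw [ENNReal.log_top, EReal.coe_mul_top_of_pos hc, erealToENNReal, if_pos rfl] at hle
    exact absurd (lt_of_le_of_lt hle ENNReal.ofReal_lt_top) (lt_irrefl _)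
  rcases eq_or_ne h 0 with rfl | h0
  · exact zero_le
  have hpos : 0 < h.toReal := ENNReal.toReal_pos h0 htop
  have hlog : ENNReal.log h = ((Real.log h.toReal : ℝ) : EReal) := ENNReal.log_pos_real' hpos
  rw [hlog, ← EReal.coe_mul, erealToENNReal, if_neg (EReal.coe_ne_top _), EReal.toReal_coe] at hle
  rw [ENNReal.le_ofReal_iff_toReal_le htop (Real.exp_nonneg _)]
  by_cases hcl : (q - 1)⁻¹ * Real.log h.toReal ≤ 0
  · have hL : Real.log h.toReal ≤ 0 := by nlinarith
    calc h.toReal = Real.exp (Real.log h.toReal) := (Real.exp_log hpos).symm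
      _ ≤ Real.exp ((q - 1) * m) := Real.exp_le_exp.mpr (by nlinarith)
  · push_neg at hcl
    have h2 : (q - 1)⁻¹ * Real.log h.toReal ≤ m :=
      (ENNReal.ofReal_le_ofReal_iff hm).mp hle
    have hL : Real.log h.toReal ≤ (q - 1) * m := by
      have h3 := mul_le_mul_of_nonneg_left h2 (by linarith : (0:ℝ) ≤ q - 1)
      have h4 : (q - 1) * ((q - 1)⁻¹ * Real.log h.toReal) = Real.log h.toReal :=
        mul_inv_cancel_left₀ (by linarith : q - 1 ≠ 0) _
      linarith
    calc h.toReal = Real.exp (Real.log h.toReal) := (Real.exp_log hpos).symm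
      _ ≤ Real.exp ((q - 1) * m) := Real.exp_le_exp.mpr hL

lemma erealToENNReal_top : erealToENNReal (⊤ : EReal) = ⊤ := if_pos rfl

lemma erealToENNReal_coe (r : ℝ) : erealToENNReal (r : EReal) = ENNReal.ofReal r := by
  rw [erealToENNReal, if_neg (EReal.coe_ne_top _), EReal.toReal_coe]

lemma erealToENNReal_bot : erealToENNReal (⊥ : EReal) = 0 := by
  rw [erealToENNReal, if_neg (by simp), EReal.toReal_bot, ENNReal.ofReal_zero]

lemma renyi_log_add (hq : 1 < q) {a b : ℝ≥0∞} {m : ℝ} (hm : 0 ≤ m)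
    (hab : a ≤ ENNReal.ofReal (Real.exp ((q - 1) * m)) * b) :
    erealToENNReal ((((q - 1)⁻¹ : ℝ) : EReal) * ENNReal.log a)
      ≤ erealToENNReal ((((q - 1)⁻¹ : ℝ) : EReal) * ENNReal.log b) + ENNReal.ofReal m := by
  have hc : (0:ℝ) < (q - 1)⁻¹ := inv_pos.mpr (by linarith)
  rcases eq_or_ne b ⊤ with rfl | hbt
  · rw [ENNReal.log_top, EReal.coe_mul_top_of_pos hc, erealToENNReal_top, top_add]
    exact le_top
  rcases eq_or_ne b 0 with rfl | hb0
  · have ha : a = 0 := le_antisymm (by simpa using hab) zero_le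
    subst ha
    rw [ENNReal.log_zero, EReal.coe_mul_bot_of_pos hc, erealToENNReal_bot]
    exact zero_le
  have hmono : erealToENNReal ((((q - 1)⁻¹ : ℝ) : EReal) * ENNReal.log a)
      ≤ erealToENNReal ((((q - 1)⁻¹ : ℝ) : EReal) *
        ENNReal.log (ENNReal.ofReal (Real.exp ((q - 1) * m)) * b)) :=
    erealToENNReal_mono (mul_le_mul_of_nonneg_left (ENNReal.log_monotone hab)
      (by exact_mod_cast hc.le))
  refine le_trans hmono ?_
  have hbpos : 0 < b.toReal := ENNReal.toReal_pos hb0 hbt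
  rw [ENNReal.log_mul_add, ENNReal.log_ofReal_of_pos (Real.exp_pos _), Real.log_exp,
    ENNReal.log_pos_real' hbpos, ← EReal.coe_add, ← EReal.coe_mul, ← EReal.coe_mul,
    erealToENNReal_coe, erealToENNReal_coe]
  have hexp : (q - 1)⁻¹ * ((q - 1) * m + Real.log b.toReal)
      = m + (q - 1)⁻¹ * Real.log b.toReal := by
    rw [mul_add, ← mul_assoc, inv_mul_cancel₀ (by linarith : q - 1 ≠ 0), one_mul]
  rw [hexp]
  refine le_trans ENNReal.ofReal_add_le ?_
  rw [add_comm]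

end Helpers

/-- **Rényi composition rule for `q ∈ (1, ∞)`.** -/
theorem renyi_composition_rule [StandardBorelSpace S] [StandardBorelSpace T]
    (μXY νXY : Measure (S × T)) [IsProbabilityMeasure μXY] [IsProbabilityMeasure νXY]
    (κ η : Kernel S T) [IsMarkovKernel κ] [IsMarkovKernel η]
    (hκ : μXY = μXY.fst ⊗ₘ κ) (hη : νXY = νXY.fst ⊗ₘ η)
    (q : ℝ) (hq : 1 < q) :
    renyiDiv q μXY νXY ≤
      renyiDiv q μXY.fst νXY.fst +
        essSup (fun x => renyiDiv q (κ x) (η x)) μXY.fst := by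
  have hq1 : q ≠ 1 := hq.ne'
  by_cases hX : renyiDiv q μXY.fst νXY.fst = ⊤
  · rw [hX, top_add]; exact le_top
  by_cases hMt : essSup (fun x => renyiDiv q (κ x) (η x)) μXY.fst = ⊤
  · rw [hMt, add_top]; exact le_top
  set M := essSup (fun x => renyiDiv q (κ x) (η x)) μXY.fst with hMdef
  set m := M.toReal with hmdef
  have hm0 : 0 ≤ m := ENNReal.toReal_nonneg
  have hMm : ENNReal.ofReal m = M := ENNReal.ofReal_toReal hMt
  set C := ENNReal.ofReal (Real.exp ((q - 1) * m)) with hCdef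
  have hacX : μXY.fst ≪ νXY.fst := ac_of_renyiDiv_ne_top hq hX
  set g := (μXY.fst).rnDeriv νXY.fst with hgdef
  have hgmeas : Measurable g := Measure.measurable_rnDeriv _ _
  set d := Kernel.rnDeriv κ η with hddef
  have hdmeas : Measurable (fun p : S × T => d p.1 p.2) := Kernel.measurable_rnDeriv κ η
  set f : S × T → ℝ≥0∞ := fun p => g p.1 * d p.1 p.2 with hfdef
  have hfmeas : Measurable f := (hgmeas.comp measurable_fst).mul hdmeas
  have hνν : (νXY.fst).withDensity g = μXY.fst := Measure.withDensity_rnDeriv_eq _ _ hacX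
  have haek : ∀ᵐ x ∂μXY.fst, κ x ≪ η x ∧
      ∫⁻ y, ((κ x).rnDeriv (η x) y) ^ q ∂η x ≤ C := by
    filter_upwards [ENNReal.ae_le_essSup (fun x => renyiDiv q (κ x) (η x))] with x hx
    have hlt : renyiDiv q (κ x) (η x) ≠ ⊤ := by
      intro htop; rw [htop] at hx; exact hMt (top_le_iff.mp hx)
    have hack : κ x ≪ η x := ac_of_renyiDiv_ne_top hq hlt
    have hx' : erealToENNReal ((((q - 1)⁻¹ : ℝ) : EReal) *
        ENNReal.log (∫⁻ y, ((κ x).rnDeriv ((κ x) + (η x)) y) ^ q *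
          ((η x).rnDeriv ((κ x) + (η x)) y) ^ (1 - q) ∂((κ x) + (η x))))
        ≤ ENNReal.ofReal m := by
      rw [hMm]
      rw [renyiDiv, if_neg hq1] at hx
      exact hx
    have hH := hellinger_le_of_renyi_le hq hm0 hx'
    rw [hellinger_of_ac hq hack] at hH
    exact ⟨hack, hH⟩
  have haek' : ∀ᵐ x ∂νXY.fst, g x ≠ 0 → (κ x ≪ η x ∧
      ∫⁻ y, ((κ x).rnDeriv (η x) y) ^ q ∂η x ≤ C) := by
    rw [← hνν] at haek
    exact (ae_withDensity_iff hgmeas).mp haek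
  have hwd : μXY = νXY.withDensity f := by
    ext s hs
    rw [withDensity_apply _ hs]
    have hstep1 : ∫⁻ p in s, f p ∂νXY = ∫⁻ x, ∫⁻ y, s.indicator f (x, y) ∂η x ∂νXY.fst := by
      rw [← lintegral_indicator hs]
      conv_lhs => rw [hη]
      rw [Measure.lintegral_compProd (hfmeas.indicator hs)]
    have hinner : ∀ x, ∫⁻ y, s.indicator f (x, y) ∂η x
        = g x * ∫⁻ y in Prod.mk x ⁻¹' s, d x y ∂η x := by
      intro x
      have hmeasI : Measurable ((Prod.mk x ⁻¹' s).indicator (d x)) :=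
        (hdmeas.comp measurable_prodMk_left).indicator (measurable_prodMk_left hs)
      rw [← lintegral_indicator (measurable_prodMk_left hs), ← lintegral_const_mul _ hmeasI]
      refine lintegral_congr fun y => ?_
      by_cases hy : (x, y) ∈ s
      · rw [Set.indicator_of_mem hy, Set.indicator_of_mem (show y ∈ Prod.mk x ⁻¹' s from hy)]
      · rw [Set.indicator_of_notMem hy,
          Set.indicator_of_notMem (show y ∉ Prod.mk x ⁻¹' s from hy), mul_zero]
    have hae2 : (fun x => g x * ∫⁻ y in Prod.mk x ⁻¹' s, d x y ∂η x)
        =ᵐ[νXY.fst] fun x => g x * κ x (Prod.mk x ⁻¹' s) := by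
      filter_upwards [haek'] with x hx
      by_cases hgx : g x = 0
      · rw [hgx, zero_mul, zero_mul]
      · obtain ⟨hack, -⟩ := hx hgx
        congr 1
        calc ∫⁻ y in Prod.mk x ⁻¹' s, d x y ∂η x
            = ∫⁻ y in Prod.mk x ⁻¹' s, (κ x).rnDeriv (η x) y ∂η x :=
              lintegral_congr_ae (ae_restrict_of_ae Kernel.rnDeriv_eq_rnDeriv_measure)
          _ = κ x (Prod.mk x ⁻¹' s) := Measure.setLIntegral_rnDeriv hack _
    calc μXY s = (μXY.fst ⊗ₘ κ) s := by rw [← hκ]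
      _ = ∫⁻ x, κ x (Prod.mk x ⁻¹' s) ∂μXY.fst := Measure.compProd_apply hs
      _ = ∫⁻ x, κ x (Prod.mk x ⁻¹' s) ∂(νXY.fst.withDensity g) := by rw [hνν]
      _ = ∫⁻ x, g x * κ x (Prod.mk x ⁻¹' s) ∂νXY.fst := by
          rw [lintegral_withDensity_eq_lintegral_mul _ hgmeas
            (Kernel.measurable_kernel_prodMk_left hs)]
          rfl
      _ = ∫⁻ x, g x * ∫⁻ y in Prod.mk x ⁻¹' s, d x y ∂η x ∂νXY.fst :=
          (lintegral_congr_ae hae2).symm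
      _ = ∫⁻ x, ∫⁻ y, s.indicator f (x, y) ∂η x ∂νXY.fst :=
          lintegral_congr fun x => (hinner x).symm
      _ = ∫⁻ p in s, f p ∂νXY := hstep1.symm
  have hacJ : μXY ≪ νXY := by
    rw [hwd]; exact withDensity_absolutelyContinuous _ _
  have hrnJ : μXY.rnDeriv νXY =ᵐ[νXY] f := by
    rw [hwd]
    exact Measure.rnDeriv_withDensity νXY hfmeas
  have hmain : ∫⁻ p, (μXY.rnDeriv (μXY + νXY) p) ^ q *
        (νXY.rnDeriv (μXY + νXY) p) ^ (1 - q) ∂(μXY + νXY)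
      ≤ C * ∫⁻ x, (μXY.fst.rnDeriv (μXY.fst + νXY.fst) x) ^ q *
        (νXY.fst.rnDeriv (μXY.fst + νXY.fst) x) ^ (1 - q) ∂(μXY.fst + νXY.fst) := by
    rw [hellinger_of_ac hq hacJ, hellinger_of_ac hq hacX]
    calc ∫⁻ p, (μXY.rnDeriv νXY p) ^ q ∂νXY
        = ∫⁻ p, f p ^ q ∂νXY := lintegral_congr_ae
            (hrnJ.mono fun p hp => by dsimp only; exact congrArg (· ^ q) hp)
      _ = ∫⁻ x, ∫⁻ y, f (x, y) ^ q ∂η x ∂νXY.fst := by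
          conv_lhs => rw [hη]
          exact Measure.lintegral_compProd (hfmeas.pow_const q)
      _ = ∫⁻ x, (g x) ^ q * ∫⁻ y, (d x y) ^ q ∂η x ∂νXY.fst := by
          refine lintegral_congr fun x => ?_
          have hmeasq : Measurable fun y => d x y ^ q :=
            (hdmeas.comp measurable_prodMk_left).pow_const q
          rw [← lintegral_const_mul _ hmeasq]
          refine lintegral_congr fun y => ?_
          exact ENNReal.mul_rpow_of_nonneg _ _ (by linarith)
      _ ≤ ∫⁻ x, (g x) ^ q * C ∂νXY.fst := by
          refine lintegral_mono_ae ?_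
          filter_upwards [haek'] with x hx
          by_cases hgx : g x = 0
          · rw [hgx, ENNReal.zero_rpow_of_pos (by linarith), zero_mul, zero_mul]
          · obtain ⟨hack, hH⟩ := hx hgx
            refine mul_le_mul_right ?_ _
            calc ∫⁻ y, (d x y) ^ q ∂η x
                = ∫⁻ y, ((κ x).rnDeriv (η x) y) ^ q ∂η x :=
                  lintegral_congr_ae (Kernel.rnDeriv_eq_rnDeriv_measure.mono
                    fun y hy => by dsimp only; exact congrArg (· ^ q) hy)
              _ ≤ C := hH
      _ = C * ∫⁻ x, (g x) ^ q ∂νXY.fst := by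
          rw [lintegral_mul_const _ (hgmeas.pow_const q), mul_comm]
  rw [renyiDiv, if_neg hq1, renyiDiv, if_neg hq1, ← hMm]
  exact renyi_log_add hq hm0 hmain

end SCR
end
end

section
/- Convexity principle for the KL divergence: Let P be a Markov kernel on a Polish space X and let ρ : X×X → [0,∞] be a measurable function such that KL(δ_x P ∥ δ_y P) ≤ ρ(x,y) for all x,y ∈ X. Then for all probability measures μ, ν on X, KL(μP ∥ νP) ≤ inf_{γ ∈ C(μ,ν)} ∫ ρ(x,y) γ(dx,dy). -/
open MeasureTheory ProbabilityTheory ENNReal Matrix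

noncomputable section

namespace SCR

open scoped Classical

variable {Ω S T : Type*} [MeasurableSpace Ω] [MeasurableSpace S] [MeasurableSpace T]

section Helpers

variable {X : Type*} [MeasurableSpace X]

lemma psi_nonneg {t : ℝ} (ht : 0 ≤ t) : 0 ≤ t * Real.log t - t + 1 := by
  rcases eq_or_lt_of_le ht with h | h
  · simp [← h]
  · have h1 : Real.log t⁻¹ ≤ t⁻¹ - 1 := Real.log_le_sub_one_of_pos (by positivity)
    rw [Real.log_inv] at h1
    have h2 : t * t⁻¹ = 1 := mul_inv_cancel₀ h.ne'
    nlinarith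

lemma fenchel {t : ℝ} (s : ℝ) (ht : 0 ≤ t) :
    t * s ≤ (t * Real.log t - t + 1) + (Real.exp s - 1) := by
  rcases eq_or_lt_of_le ht with h | h
  · simp [← h]
    positivity
  · have h1 : (s - Real.log t) + 1 ≤ Real.exp (s - Real.log t) := Real.add_one_le_exp _
    have h3 : t * Real.exp (s - Real.log t) = Real.exp s := by
      rw [Real.exp_sub, Real.exp_log h]
      field_simp
    nlinarith [mul_le_mul_of_nonneg_left h1 ht]

lemma integrable_of_bound {m : Measure Ω} [IsFiniteMeasure m] {g : Ω → ℝ} (hg : Measurable g)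
    {B : ℝ} (hB : ∀ x, |g x| ≤ B) : Integrable g m :=
  Integrable.mono' (integrable_const B) hg.aestronglyMeasurable
    (ae_of_all _ fun x => by simpa [Real.norm_eq_abs] using hB x)

lemma gibbs (α β : Measure Ω) [IsProbabilityMeasure α] [IsProbabilityMeasure β]
    {g : Ω → ℝ} (hg : Measurable g) {B : ℝ} (hB : ∀ x, |g x| ≤ B) :
    ENNReal.ofReal (∫ x, g x ∂α - Real.log (∫ x, Real.exp (g x) ∂β)) ≤ klDiv α β := by
  by_cases hab : α ≪ β
  swap
  · simp [klDiv, hab]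
  rw [klDiv, if_pos hab]
  set r : Ω → ℝ := fun x => (α.rnDeriv β x).toReal with hr_def
  set ψ : Ω → ℝ := fun x => r x * Real.log (r x) - r x + 1 with hψ_def
  set K := ∫⁻ x, ENNReal.ofReal (ψ x) ∂β with hK_def
  by_cases hK : K = ⊤
  · exact hK ▸ le_top
  have hr_meas : Measurable r := (Measure.measurable_rnDeriv α β).ennreal_toReal
  have hr_int : Integrable r β := Measure.integrable_toReal_rnDeriv
  have hr_one : ∫ x, r x ∂β = 1 := by
    rw [Measure.integral_toReal_rnDeriv hab]; simp
  have hψ_meas : Measurable ψ := by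
    exact ((hr_meas.mul (hr_meas.log)).sub hr_meas).add measurable_const
  have hψ_nn : ∀ x, 0 ≤ ψ x := fun x => psi_nonneg ENNReal.toReal_nonneg
  have hψ_int : Integrable ψ β :=
    ⟨hψ_meas.aestronglyMeasurable,
      (hasFiniteIntegral_iff_ofReal (ae_of_all _ hψ_nn)).2 (lt_top_iff_ne_top.2 hK)⟩
  have hψ_eq : ∫ x, ψ x ∂β = K.toReal := by
    rw [hK_def, ← ofReal_integral_eq_lintegral_ofReal hψ_int (ae_of_all _ hψ_nn),
      ENNReal.toReal_ofReal (integral_nonneg hψ_nn)]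
  set c := ∫ x, Real.exp (g x) ∂β with hc_def
  have hexp_int : Integrable (fun x => Real.exp (g x)) β :=
    integrable_of_bound (hg.exp) (B := Real.exp B) fun x => by
      rw [abs_of_pos (Real.exp_pos _)]
      exact Real.exp_le_exp.2 ((abs_le.1 (hB x)).2)
  have hc_pos : 0 < c := by
    have h1 : ∫ (_ : Ω), Real.exp (-B) ∂β ≤ c :=
      integral_mono (integrable_const _) hexp_int
        (fun x => Real.exp_le_exp.2 (neg_le_of_abs_le (hB x)))
    have h2 : ∫ (_ : Ω), Real.exp (-B) ∂β = Real.exp (-B) := by simp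
    linarith [Real.exp_pos (-B)]
  have hpt : ∀ x, r x * (g x - Real.log c) ≤ ψ x + (Real.exp (g x) / c - 1) := by
    intro x
    have := fenchel (t := r x) (g x - Real.log c) ENNReal.toReal_nonneg
    rwa [Real.exp_sub, Real.exp_log hc_pos] at this
  have hg_int_α : Integrable g α := integrable_of_bound hg hB
  have h1_int : Integrable (fun x => (g x - Real.log c) * r x) β := by
    refine hr_int.bdd_mul (c := B + |Real.log c|)
      ((hg.sub measurable_const).aestronglyMeasurable) (ae_of_all _ fun x => ?_)
    rw [Real.norm_eq_abs]
    calc |g x - Real.log c| ≤ |g x| + |Real.log c| := abs_sub _ _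
      _ ≤ B + |Real.log c| := by linarith [hB x]
  have h2_int : Integrable (fun x => ψ x + (Real.exp (g x) / c - 1)) β :=
    hψ_int.add ((hexp_int.div_const c).sub (integrable_const 1))
  have hmono : ∫ x, (g x - Real.log c) * r x ∂β ≤ ∫ x, ψ x + (Real.exp (g x) / c - 1) ∂β :=
    integral_mono h1_int h2_int (fun x => by rw [mul_comm]; exact hpt x)
  have hLHS : ∫ x, (g x - Real.log c) * r x ∂β = ∫ x, g x ∂α - Real.log c := by
    have : (fun x => (g x - Real.log c) * r x) = fun x => r x • (g x - Real.log c) := by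
      funext x; simp [smul_eq_mul, mul_comm]
    rw [this, MeasureTheory.integral_rnDeriv_smul hab,
      integral_sub hg_int_α (integrable_const _), integral_const]
    simp
  have hRHS : ∫ x, ψ x + (Real.exp (g x) / c - 1) ∂β = K.toReal := by
    have h3 : Integrable (fun x => Real.exp (g x) / c - 1) β :=
      (hexp_int.div_const c).sub (integrable_const 1)
    rw [integral_add hψ_int h3, hψ_eq,
      integral_sub (hexp_int.div_const c) (integrable_const 1), integral_div, ← hc_def,
      div_self hc_pos.ne', integral_const]
    simp
  rw [hLHS, hRHS] at hmono
  calc ENNReal.ofReal (∫ x, g x ∂α - Real.log c) ≤ ENNReal.ofReal K.toReal :=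
        ENNReal.ofReal_le_ofReal hmono
    _ = K := ENNReal.ofReal_toReal hK



lemma isProb_bind (μ : Measure X) [IsProbabilityMeasure μ] (P : Kernel X X) [IsMarkovKernel P] :
    IsProbabilityMeasure (μ.bind (fun x => P x)) := by
  constructor
  rw [Measure.bind_apply MeasurableSet.univ (Kernel.measurable P).aemeasurable]
  simp

lemma ofReal_integral_le {m : Measure Ω} {f : Ω → ℝ} (hf : Integrable f m) :
    ENNReal.ofReal (∫ x, f x ∂m) ≤ ∫⁻ x, ENNReal.ofReal (f x) ∂m := by
  calc ENNReal.ofReal (∫ x, f x ∂m) ≤ ENNReal.ofReal (∫ x, max (f x) 0 ∂m) :=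
        ENNReal.ofReal_le_ofReal (integral_mono hf hf.pos_part (fun x => le_max_left _ _))
    _ = ∫⁻ x, ENNReal.ofReal (max (f x) 0) ∂m :=
        ofReal_integral_eq_lintegral_ofReal hf.pos_part (ae_of_all _ fun x => le_max_right _ _)
    _ = ∫⁻ x, ENNReal.ofReal (f x) ∂m := by
        refine lintegral_congr fun x => ?_
        rcases le_total (f x) 0 with h | h
        · rw [max_eq_right h, ENNReal.ofReal_zero, ENNReal.ofReal_of_nonpos h]
        · rw [max_eq_left h]

lemma integral_toReal_lintegral {m : Measure X} [IsProbabilityMeasure m] {F : X → ℝ≥0∞}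
    (hF : Measurable F) {C : ℝ≥0∞} (hC : C ≠ ⊤) (hFC : ∀ x, F x ≤ C) :
    ∫ x, (F x).toReal ∂m = (∫⁻ x, F x ∂m).toReal :=
  integral_toReal hF.aemeasurable (ae_of_all _ fun x => lt_of_le_of_lt (hFC x) hC.lt_top)

lemma integral_bind_of_bound (μ : Measure X) [IsProbabilityMeasure μ]
    (P : Kernel X X) [IsMarkovKernel P]
    {g : X → ℝ} (hg : Measurable g) {B : ℝ} (hB : ∀ x, |g x| ≤ B) :
    ∫ y, g y ∂(μ.bind (fun x => P x)) = ∫ x, ∫ y, g y ∂(P x) ∂μ := by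
  haveI := isProb_bind μ P
  have hInt : Integrable g (μ.bind (fun x => P x)) := integrable_of_bound hg hB
  have hIntP : ∀ x, Integrable g (P x) := fun x => integrable_of_bound hg hB
  set Fp : X → ℝ≥0∞ := fun x => ∫⁻ y, ENNReal.ofReal (g y) ∂(P x) with hFp_def
  set Fm : X → ℝ≥0∞ := fun x => ∫⁻ y, ENNReal.ofReal (-g y) ∂(P x) with hFm_def
  have hFp_meas : Measurable Fp :=
    Measurable.lintegral_kernel_prod_right ((measurable_ofReal.comp hg).comp measurable_snd)
  have hFm_meas : Measurable Fm :=
    Measurable.lintegral_kernel_prod_right ((measurable_ofReal.comp hg.neg).comp measurable_snd)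
  have hbnd : ∀ (h : X → ℝ) (_ : ∀ x, |h x| ≤ B) (x : X),
      (∫⁻ y, ENNReal.ofReal (h y) ∂(P x)) ≤ ENNReal.ofReal B := fun h hh x => by
    calc ∫⁻ y, ENNReal.ofReal (h y) ∂(P x) ≤ ∫⁻ _, ENNReal.ofReal B ∂(P x) :=
          lintegral_mono fun y => ENNReal.ofReal_le_ofReal ((abs_le.1 (hh y)).2)
      _ = ENNReal.ofReal B := by simp
  have hBp := hbnd g hB
  have hBm := hbnd (fun x => -g x) (fun x => by rw [abs_neg]; exact hB x)
  have hsplit : ∀ x, ∫ y, g y ∂(P x) = (Fp x).toReal - (Fm x).toReal := fun x =>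
    integral_eq_lintegral_pos_part_sub_lintegral_neg_part (hIntP x)
  have hsplit0 : ∫ y, g y ∂(μ.bind (fun x => P x))
      = (∫⁻ x, Fp x ∂μ).toReal - (∫⁻ x, Fm x ∂μ).toReal := by
    rw [integral_eq_lintegral_pos_part_sub_lintegral_neg_part hInt,
      Measure.lintegral_bind (Kernel.measurable P).aemeasurable
        (f := fun y => ENNReal.ofReal (g y)) hg.ennreal_ofReal.aemeasurable,
      Measure.lintegral_bind (Kernel.measurable P).aemeasurable
        (f := fun y => ENNReal.ofReal (-g y)) hg.neg.ennreal_ofReal.aemeasurable]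
  have hip : Integrable (fun x => (Fp x).toReal) μ := by
    refine integrable_of_bound hFp_meas.ennreal_toReal (B := max B 0) fun x => ?_
    rw [abs_of_nonneg ENNReal.toReal_nonneg]
    exact ENNReal.toReal_le_of_le_ofReal (le_max_right _ _)
      ((hBp x).trans (ENNReal.ofReal_le_ofReal (le_max_left _ _)))
  have him : Integrable (fun x => (Fm x).toReal) μ := by
    refine integrable_of_bound hFm_meas.ennreal_toReal (B := max B 0) fun x => ?_
    rw [abs_of_nonneg ENNReal.toReal_nonneg]
    exact ENNReal.toReal_le_of_le_ofReal (le_max_right _ _)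
      ((hBm x).trans (ENNReal.ofReal_le_ofReal (le_max_left _ _)))
  calc ∫ y, g y ∂(μ.bind (fun x => P x))
      = (∫⁻ x, Fp x ∂μ).toReal - (∫⁻ x, Fm x ∂μ).toReal := hsplit0
    _ = ∫ x, (Fp x).toReal ∂μ - ∫ x, (Fm x).toReal ∂μ := by
        rw [integral_toReal_lintegral hFp_meas ENNReal.ofReal_ne_top hBp,
          integral_toReal_lintegral hFm_meas ENNReal.ofReal_ne_top hBm]
    _ = ∫ x, ((Fp x).toReal - (Fm x).toReal) ∂μ := (integral_sub hip him).symm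
    _ = ∫ x, ∫ y, g y ∂(P x) ∂μ := by
        exact integral_congr_ae (ae_of_all _ fun x => (hsplit x).symm)

lemma step2 (P : Kernel X X) [IsMarkovKernel P]
    (μ ν : Measure X) [IsProbabilityMeasure μ] [IsProbabilityMeasure ν]
    (γ : Measure (X × X)) (hγ1 : γ.fst = μ) (hγ2 : γ.snd = ν)
    {g : X → ℝ} (hg : Measurable g) {B : ℝ} (hB : ∀ x, |g x| ≤ B) :
    ENNReal.ofReal (∫ y, g y ∂(μ.bind (fun x => P x)) -
      Real.log (∫ y, Real.exp (g y) ∂(ν.bind (fun x => P x)))) ≤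
    ∫⁻ p, klDiv (P p.1) (P p.2) ∂γ := by
  haveI : IsProbabilityMeasure γ := ⟨by rw [← Measure.fst_univ, hγ1, measure_univ]⟩
  haveI := isProb_bind μ P
  haveI := isProb_bind ν P
  have hne : Nonempty X := by
    by_contra h
    rw [not_nonempty_iff] at h
    have h1 : (μ : Measure X) Set.univ = 1 := measure_univ
    rw [Set.univ_eq_empty_iff.2 h, measure_empty] at h1
    exact zero_ne_one h1
  have hBnn : 0 ≤ B := le_trans (abs_nonneg _) (hB hne.some)
  set F : X → ℝ := fun x => ∫ y, g y ∂(P x) with hF_def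
  set H : X → ℝ := fun x => ∫ y, Real.exp (g y) ∂(P x) with hH_def
  have hexp_bd : ∀ y, |Real.exp (g y)| ≤ Real.exp B := fun y => by
    rw [abs_of_pos (Real.exp_pos _)]
    exact Real.exp_le_exp.2 ((abs_le.1 (hB y)).2)
  have hF_meas : StronglyMeasurable F := by
    exact StronglyMeasurable.integral_kernel_prod_right'
      (f := fun p : X × X => g p.2) ((hg.comp measurable_snd).stronglyMeasurable)
  have hH_meas : StronglyMeasurable H := by
    exact StronglyMeasurable.integral_kernel_prod_right'
      (f := fun p : X × X => Real.exp (g p.2))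
      ((hg.comp measurable_snd).exp.stronglyMeasurable)
  have hF_bd : ∀ x, |F x| ≤ B := fun x => by
    rw [← Real.norm_eq_abs]
    calc ‖F x‖ ≤ B * ((P x) Set.univ).toReal :=
          norm_integral_le_of_norm_le_const (ae_of_all _ fun y => by
            rw [Real.norm_eq_abs]; exact hB y)
      _ = B := by simp
  have hH_lb : ∀ x, Real.exp (-B) ≤ H x := fun x => by
    have h1 : ∫ (_ : X), Real.exp (-B) ∂(P x) ≤ H x :=
      integral_mono (integrable_const _) (integrable_of_bound hg.exp hexp_bd)
        (fun y => Real.exp_le_exp.2 (neg_le_of_abs_le (hB y)))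
    simpa using h1
  have hH_ub : ∀ x, H x ≤ Real.exp B := fun x => by
    have h1 : H x ≤ ∫ (_ : X), Real.exp B ∂(P x) :=
      integral_mono (integrable_of_bound hg.exp hexp_bd) (integrable_const _)
        (fun y => Real.exp_le_exp.2 ((abs_le.1 (hB y)).2))
    simpa using h1
  have hH_pos : ∀ x, 0 < H x := fun x => lt_of_lt_of_le (Real.exp_pos _) (hH_lb x)
  have hH_bd : ∀ x, |H x| ≤ Real.exp B := fun x => by
    rw [abs_of_pos (hH_pos x)]; exact hH_ub x
  have hlogH_bd : ∀ x, |Real.log (H x)| ≤ B := fun x => by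
    rw [abs_le]
    constructor
    · calc -B = Real.log (Real.exp (-B)) := by rw [Real.log_exp]
        _ ≤ Real.log (H x) := Real.log_le_log (Real.exp_pos _) (hH_lb x)
    · calc Real.log (H x) ≤ Real.log (Real.exp B) :=
          Real.log_le_log (hH_pos x) (hH_ub x)
        _ = B := Real.log_exp _
  -- marginal identities
  have hμγ : ∀ (f : X → ℝ), StronglyMeasurable f → ∫ x, f x ∂μ = ∫ p, f p.1 ∂γ := by
    intro f hf
    rw [← hγ1, Measure.fst, integral_map measurable_fst.aemeasurable hf.aestronglyMeasurable]
  have hνγ : ∀ (f : X → ℝ), StronglyMeasurable f → ∫ x, f x ∂ν = ∫ p, f p.2 ∂γ := by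
    intro f hf
    rw [← hγ2, Measure.snd, integral_map measurable_snd.aemeasurable hf.aestronglyMeasurable]
  set c : ℝ := ∫ y, Real.exp (g y) ∂(ν.bind (fun x => P x)) with hc_def
  have hc_eq : c = ∫ p, H p.2 ∂γ := by
    rw [hc_def, integral_bind_of_bound ν P hg.exp hexp_bd, ← hH_def, hνγ H hH_meas]
  have hc_pos : 0 < c := by
    rw [hc_eq]
    have h1 : ∫ (_ : X × X), Real.exp (-B) ∂γ ≤ ∫ p, H p.2 ∂γ :=
      integral_mono (integrable_const _)
        (integrable_of_bound (hH_meas.measurable.comp measurable_snd) (fun p => hH_bd p.2))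
        (fun p => hH_lb p.2)
    have h2 : ∫ (_ : X × X), Real.exp (-B) ∂γ = Real.exp (-B) := by simp
    linarith [Real.exp_pos (-B)]
  have hgα : ∫ y, g y ∂(μ.bind (fun x => P x)) = ∫ p, F p.1 ∂γ := by
    rw [integral_bind_of_bound μ P hg hB, ← hF_def, hμγ F hF_meas]
  -- Jensen via tangent line for log
  have htan : ∀ p : X × X, Real.log (H p.2) ≤ H p.2 / c + (Real.log c - 1) := by
    intro p
    have h1 : Real.log (H p.2 / c) ≤ H p.2 / c - 1 :=
      Real.log_le_sub_one_of_pos (div_pos (hH_pos _) hc_pos)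
    rw [Real.log_div (hH_pos _).ne' hc_pos.ne'] at h1
    linarith
  have hlogH_int : Integrable (fun p : X × X => Real.log (H p.2)) γ :=
    integrable_of_bound ((Real.measurable_log.comp hH_meas.measurable).comp measurable_snd)
      (fun p => hlogH_bd p.2)
  have hH2_int : Integrable (fun p : X × X => H p.2) γ :=
    integrable_of_bound (hH_meas.measurable.comp measurable_snd) (fun p => hH_bd p.2)
  have hjen : ∫ p, Real.log (H p.2) ∂γ ≤ Real.log c := by
    have h1 : ∫ p, Real.log (H p.2) ∂γ ≤ ∫ p, (H p.2 / c + (Real.log c - 1)) ∂γ :=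
      integral_mono hlogH_int ((hH2_int.div_const c).add (integrable_const _))
        (fun p => htan p)
    have h2 : ∫ p, (H p.2 / c + (Real.log c - 1)) ∂γ = Real.log c := by
      rw [integral_add (hH2_int.div_const c) (integrable_const _), integral_div,
        ← hc_eq, div_self hc_pos.ne', integral_const]
      simp
    linarith
  have hF1_int : Integrable (fun p : X × X => F p.1) γ :=
    integrable_of_bound (hF_meas.measurable.comp measurable_fst) (fun p => hF_bd p.1)
  have hmain : ∫ y, g y ∂(μ.bind (fun x => P x)) - Real.log c
      ≤ ∫ p, (F p.1 - Real.log (H p.2)) ∂γ := by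
    rw [hgα, integral_sub hF1_int hlogH_int]
    linarith
  have hD_int : Integrable (fun p : X × X => F p.1 - Real.log (H p.2)) γ :=
    hF1_int.sub hlogH_int
  calc ENNReal.ofReal (∫ y, g y ∂(μ.bind (fun x => P x)) - Real.log c)
      ≤ ENNReal.ofReal (∫ p, (F p.1 - Real.log (H p.2)) ∂γ) :=
        ENNReal.ofReal_le_ofReal hmain
    _ ≤ ∫⁻ p, ENNReal.ofReal (F p.1 - Real.log (H p.2)) ∂γ := ofReal_integral_le hD_int
    _ ≤ ∫⁻ p, klDiv (P p.1) (P p.2) ∂γ :=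
        lintegral_mono fun p => gibbs (P p.1) (P p.2) hg hB

lemma key (P : Kernel X X) [IsMarkovKernel P]
    (μ ν : Measure X) [IsProbabilityMeasure μ] [IsProbabilityMeasure ν]
    (γ : Measure (X × X)) (hγ1 : γ.fst = μ) (hγ2 : γ.snd = ν) :
    klDiv (μ.bind (fun x => P x)) (ν.bind (fun x => P x)) ≤
      ∫⁻ p, klDiv (P p.1) (P p.2) ∂γ := by
  haveI := isProb_bind μ P
  haveI := isProb_bind ν P
  set α := μ.bind (fun x => P x) with hα_def
  set β := ν.bind (fun x => P x) with hβ_def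
  by_cases hab : α ≪ β
  swap
  · -- show RHS = ⊤
    obtain ⟨s, hsm, hs0, hsne⟩ : ∃ s, MeasurableSet s ∧ β s = 0 ∧ α s ≠ 0 := by
      by_contra h
      push_neg at h
      exact hab (Measure.AbsolutelyContinuous.mk fun s hm h0 => h s hm h0)
    have hβs : ∫⁻ y, P y s ∂ν = 0 := by
      rw [← Measure.bind_apply hsm (Kernel.measurable P).aemeasurable]
      exact hs0
    have hν_ae : ∀ᵐ y ∂ν, P y s = 0 := by
      rw [lintegral_eq_zero_iff (Kernel.measurable_coe P hsm)] at hβs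
      filter_upwards [hβs] with y hy using hy
    have hγ_null : γ {p : X × X | P p.2 s ≠ 0} = 0 := by
      have h1 : MeasurableSet {y : X | P y s ≠ 0} :=
        ((Kernel.measurable_coe P hsm) (measurableSet_singleton 0)).compl
      have h2 : ν {y : X | P y s ≠ 0} = 0 := by
        have h3 := hν_ae
        rw [MeasureTheory.ae_iff] at h3
        simpa using h3
      calc γ {p : X × X | P p.2 s ≠ 0} = γ.snd {y : X | P y s ≠ 0} := by
            rw [Measure.snd_apply h1]; rfl
        _ = 0 := by rw [hγ2, h2]
    have hμ_pos : μ {x : X | P x s ≠ 0} ≠ 0 := by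
      intro hzero
      apply hsne
      rw [hα_def, Measure.bind_apply hsm (Kernel.measurable P).aemeasurable]
      rw [lintegral_eq_zero_iff (Kernel.measurable_coe P hsm)]
      rw [Filter.EventuallyEq, MeasureTheory.ae_iff]
      simpa using hzero
    have hA_meas : MeasurableSet {p : X × X | P p.1 s ≠ 0} :=
      (((Kernel.measurable_coe P hsm).comp measurable_fst)
        (measurableSet_singleton 0)).compl
    have hγA : γ {p : X × X | P p.1 s ≠ 0} ≠ 0 := by
      have : γ {p : X × X | P p.1 s ≠ 0} = μ {x : X | P x s ≠ 0} := by
        rw [← hγ1, Measure.fst_apply]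
        · rfl
        · exact ((Kernel.measurable_coe P hsm) (measurableSet_singleton 0)).compl
      rw [this]; exact hμ_pos
    set S := {p : X × X | P p.1 s ≠ 0} \ {p : X × X | P p.2 s ≠ 0} with hS_def
    have hS_meas : MeasurableSet S :=
      hA_meas.diff (((Kernel.measurable_coe P hsm).comp measurable_snd)
        (measurableSet_singleton 0)).compl
    have hγS : γ S ≠ 0 := by
      rw [hS_def, measure_diff_null hγ_null]
      exact hγA
    have htop : ∀ p ∈ S, klDiv (P p.1) (P p.2) = ⊤ := by
      intro p hp
      rw [klDiv, if_neg]
      intro hac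
      rcases hp with ⟨hp1, hp2⟩
      simp only [Set.mem_setOf_eq, not_not] at hp2
      exact hp1 (hac hp2)
    have : (⊤ : ℝ≥0∞) ≤ ∫⁻ p, klDiv (P p.1) (P p.2) ∂γ := by
      calc (⊤ : ℝ≥0∞) = ∫⁻ _ in S, ⊤ ∂γ := by
            rw [setLIntegral_const, ENNReal.top_mul hγS]
        _ ≤ ∫⁻ p in S, klDiv (P p.1) (P p.2) ∂γ := by
            refine lintegral_mono_ae ?_
            filter_upwards [ae_restrict_mem hS_meas] with p hp
            rw [htop p hp]
        _ ≤ ∫⁻ p, klDiv (P p.1) (P p.2) ∂γ :=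
            lintegral_mono' Measure.restrict_le_self le_rfl
    exact le_trans le_top this
  · -- absolutely continuous case
    set R := ∫⁻ p, klDiv (P p.1) (P p.2) ∂γ with hR_def
    rw [klDiv, if_pos hab]
    set t : X → ℝ := fun x => (α.rnDeriv β x).toReal with ht_def
    have ht_meas : Measurable t := (Measure.measurable_rnDeriv α β).ennreal_toReal
    have ht_int : Integrable t β := Measure.integrable_toReal_rnDeriv
    have ht_nn : ∀ x, 0 ≤ t x := fun x => ENNReal.toReal_nonneg
    have ht_one : ∫ x, t x ∂β = 1 := by
      rw [ht_def, Measure.integral_toReal_rnDeriv hab]; simp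
    set N : ℕ → ℝ := fun n => (n : ℝ) + 1 with hN_def
    have hN_ge1 : ∀ n, 1 ≤ N n := fun n => by
      simp only [hN_def, le_add_iff_nonneg_left]; positivity
    have hN_pos : ∀ n, 0 < N n := fun n => lt_of_lt_of_le one_pos (hN_ge1 n)
    set g : ℕ → X → ℝ := fun n x =>
      if t x = 0 then -(N n) else max (min (Real.log (t x)) (N n)) (-(N n)) with hg_def
    have hg_meas : ∀ n, Measurable (g n) := fun n =>
      Measurable.ite (ht_meas (measurableSet_singleton 0)) measurable_const
        (((Real.measurable_log.comp ht_meas).min measurable_const).max measurable_const)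
    have hg_bd : ∀ n x, |g n x| ≤ N n := by
      intro n x
      by_cases h0 : t x = 0
      · simp only [hg_def, if_pos h0, abs_neg, abs_of_pos (hN_pos n), le_refl]
      · simp only [hg_def, if_neg h0]
        rw [abs_le]
        exact ⟨le_max_right _ _,
          max_le ((min_le_right _ _)) (by linarith [hN_pos n])⟩
    set u : ℕ → X → ℝ := fun n x => g n x * t x - t x + 1 with hu_def
    have hu_meas : ∀ n, Measurable (u n) := fun n =>
      (((hg_meas n).mul ht_meas).sub ht_meas).add measurable_const
    have hu_nn : ∀ n x, 0 ≤ u n x := by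
      intro n x
      by_cases h0 : t x = 0
      · simp [hu_def, h0]
      · have ht_pos : 0 < t x := lt_of_le_of_ne (ht_nn x) (Ne.symm h0)
        simp only [hu_def, hg_def, if_neg h0]
        rcases le_total (Real.log (t x)) (-(N n)) with hlow | hmidhigh
        · have hmin : min (Real.log (t x)) (N n) = Real.log (t x) :=
            min_eq_left (le_trans hlow (by linarith [hN_pos n]))
          have hmax : max (Real.log (t x)) (-(N n)) = -(N n) := max_eq_right hlow
          rw [hmin, hmax]
          have htle : t x ≤ Real.exp (-(N n)) := by
            rw [← Real.exp_log ht_pos]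
            exact Real.exp_le_exp.2 hlow
          have hNe : N n + 1 ≤ Real.exp (N n) := Real.add_one_le_exp _
          have hkey : t x * (N n + 1) ≤ 1 := by
            calc t x * (N n + 1) ≤ Real.exp (-(N n)) * Real.exp (N n) :=
                  mul_le_mul htle hNe (by linarith [hN_pos n]) (le_of_lt (Real.exp_pos _))
              _ = 1 := by rw [← Real.exp_add]; simp
          nlinarith
        · rcases le_total (N n) (Real.log (t x)) with hhigh | hmid
          · have hmin : min (Real.log (t x)) (N n) = N n := min_eq_right hhigh
            rw [hmin, max_eq_left (by linarith [hN_pos n])]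
            nlinarith [ht_pos, hN_ge1 n]
          · have hmin : min (Real.log (t x)) (N n) = Real.log (t x) := min_eq_left hmid
            rw [hmin, max_eq_left hmidhigh]
            have := psi_nonneg (ht_nn x)
            nlinarith
    have hu_int : ∀ n, Integrable (u n) β := fun n =>
      ((ht_int.bdd_mul (c := N n) (hg_meas n).aestronglyMeasurable
        (ae_of_all _ fun x => by rw [Real.norm_eq_abs]; exact hg_bd n x)).sub ht_int).add
        (integrable_const 1)
    have hprod_int : ∀ n, Integrable (fun x => g n x * t x) β := fun n =>
      ht_int.bdd_mul (c := N n) (hg_meas n).aestronglyMeasurable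
        (ae_of_all _ fun x => by rw [Real.norm_eq_abs]; exact hg_bd n x)
    have hu_eq : ∀ n, ∫ x, u n x ∂β = ∫ y, g n y ∂α := by
      intro n
      have h1 : (fun x => g n x * t x) = fun x => (α.rnDeriv β x).toReal • g n x := by
        funext x; simp [ht_def, smul_eq_mul, mul_comm]
      have h2 : ∫ x, g n x * t x ∂β = ∫ y, g n y ∂α := by
        rw [h1, MeasureTheory.integral_rnDeriv_smul hab]
      have hsub_int : Integrable (fun x => g n x * t x - t x) β := (hprod_int n).sub ht_int
      calc ∫ x, u n x ∂β = ∫ x, ((g n x * t x - t x) + 1) ∂β := by simp only [hu_def]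
        _ = (∫ x, (g n x * t x - t x) ∂β) + ∫ _, (1 : ℝ) ∂β :=
            integral_add hsub_int (integrable_const 1)
        _ = (∫ x, g n x * t x ∂β - ∫ x, t x ∂β) + 1 := by
            rw [integral_sub (hprod_int n) ht_int]; simp
        _ = ∫ y, g n y ∂α := by rw [h2, ht_one]; ring
    -- Fatou
    have hpt : ∀ x, Filter.Tendsto (fun n => ENNReal.ofReal (u n x)) Filter.atTop
        (nhds (ENNReal.ofReal (t x * Real.log (t x) - t x + 1))) := by
      intro x
      by_cases h0 : t x = 0
      · have : ∀ n, u n x = t x * Real.log (t x) - t x + 1 := fun n => by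
          simp [hu_def, h0]
        simp_rw [this]
        exact tendsto_const_nhds
      · have ht_pos : 0 < t x := lt_of_le_of_ne (ht_nn x) (Ne.symm h0)
        have hev : ∀ᶠ n in Filter.atTop, u n x = t x * Real.log (t x) - t x + 1 := by
          filter_upwards [Filter.eventually_ge_atTop ⌈|Real.log (t x)|⌉₊] with n hn
          have hle : |Real.log (t x)| ≤ N n := by
            calc |Real.log (t x)| ≤ (⌈|Real.log (t x)|⌉₊ : ℝ) := Nat.le_ceil _
              _ ≤ (n : ℝ) := Nat.cast_le.2 hn
              _ ≤ N n := by simp [hN_def]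
          have habs := abs_le.1 hle
          simp only [hu_def, hg_def, if_neg h0, min_eq_left habs.2, max_eq_left habs.1]
          ring
        exact Filter.Tendsto.congr' (by filter_upwards [hev] with n hn; rw [hn])
          tendsto_const_nhds
    have hfatou : ∫⁻ x, ENNReal.ofReal (t x * Real.log (t x) - t x + 1) ∂β ≤
        Filter.liminf (fun n => ∫⁻ x, ENNReal.ofReal (u n x) ∂β) Filter.atTop := by
      have h1 : ∫⁻ x, ENNReal.ofReal (t x * Real.log (t x) - t x + 1) ∂β
          = ∫⁻ x, Filter.liminf (fun n => ENNReal.ofReal (u n x)) Filter.atTop ∂β :=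
        lintegral_congr fun x => ((hpt x).liminf_eq).symm
      rw [h1]
      exact lintegral_liminf_le (fun n => (hu_meas n).ennreal_ofReal)
    have hlin : ∀ n, ∫⁻ x, ENNReal.ofReal (u n x) ∂β = ENNReal.ofReal (∫ y, g n y ∂α) := by
      intro n
      rw [← ofReal_integral_eq_lintegral_ofReal (hu_int n) (ae_of_all _ (hu_nn n)), hu_eq n]
    -- convergence of the normalizing constants
    set en : ℕ → ℝ := fun n => ∫ y, Real.exp (g n y) ∂β with hen_def
    have hten : Filter.Tendsto en Filter.atTop (nhds 1) := by
      rw [show (1 : ℝ) = ∫ x, t x ∂β from ht_one.symm]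
      refine tendsto_integral_of_dominated_convergence (fun x => t x + 1)
        (fun n => ((hg_meas n).exp).aestronglyMeasurable)
        (ht_int.add (integrable_const 1)) (fun n => ae_of_all _ fun x => ?_)
        (ae_of_all _ fun x => ?_)
      · rw [Real.norm_eq_abs, abs_of_pos (Real.exp_pos _)]
        by_cases h0 : t x = 0
        · simp only [hg_def, if_pos h0]
          calc Real.exp (-(N n)) ≤ 1 := Real.exp_le_one_iff.2 (by linarith [hN_pos n])
            _ ≤ t x + 1 := by linarith [ht_nn x]
        · simp only [hg_def, if_neg h0]
          have ht_pos : 0 < t x := lt_of_le_of_ne (ht_nn x) (Ne.symm h0)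
          have hmed : max (min (Real.log (t x)) (N n)) (-(N n)) ≤ max (Real.log (t x)) 0 :=
            max_le (le_trans (min_le_left _ _) (le_max_left _ _))
              (le_trans (by linarith [hN_pos n]) (le_max_right _ _))
          calc Real.exp (max (min (Real.log (t x)) (N n)) (-(N n)))
              ≤ Real.exp (max (Real.log (t x)) 0) := Real.exp_le_exp.2 hmed
            _ = max (Real.exp (Real.log (t x))) (Real.exp 0) :=
                (Real.exp_monotone.map_max)
            _ = max (t x) 1 := by rw [Real.exp_log ht_pos, Real.exp_zero]
            _ ≤ t x + 1 := max_le (by linarith [ht_nn x]) (by linarith [ht_nn x])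
      · by_cases h0 : t x = 0
        · have heq : ∀ n, Real.exp (g n x) = Real.exp (-(N n)) := fun n => by
            simp [hg_def, h0]
          simp_rw [heq, h0]
          have h1 : Filter.Tendsto (fun n : ℕ => (n : ℝ) + 1) Filter.atTop Filter.atTop :=
            Filter.tendsto_atTop_add_const_right _ 1 tendsto_natCast_atTop_atTop
          have h2 : Filter.Tendsto (fun n : ℕ => -((n : ℝ) + 1)) Filter.atTop Filter.atBot :=
            Filter.tendsto_neg_atBot_iff.2 h1
          exact Real.tendsto_exp_atBot.comp h2
        · have ht_pos : 0 < t x := lt_of_le_of_ne (ht_nn x) (Ne.symm h0)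
          have hev : ∀ᶠ n in Filter.atTop, Real.exp (g n x) = t x := by
            filter_upwards [Filter.eventually_ge_atTop ⌈|Real.log (t x)|⌉₊] with n hn
            have hle : |Real.log (t x)| ≤ N n := by
              calc |Real.log (t x)| ≤ (⌈|Real.log (t x)|⌉₊ : ℝ) := Nat.le_ceil _
                _ ≤ (n : ℝ) := Nat.cast_le.2 hn
                _ ≤ N n := by simp [hN_def]
            have habs := abs_le.1 hle
            simp only [hg_def, if_neg h0, min_eq_left habs.2, max_eq_left habs.1]
            exact Real.exp_log ht_pos
          exact Filter.Tendsto.congr' (by filter_upwards [hev] with n hn; rw [hn])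
            tendsto_const_nhds
    have hlog : Filter.Tendsto (fun n => ENNReal.ofReal (Real.log (en n))) Filter.atTop
        (nhds 0) := by
      have h1 : Filter.Tendsto (fun n => Real.log (en n)) Filter.atTop (nhds 0) := by
        have := (Real.continuousAt_log one_ne_zero).tendsto.comp hten
        simpa [Function.comp_def] using this
      have h2 := (ENNReal.continuous_ofReal.tendsto 0).comp h1
      simpa [Function.comp_def] using h2
    have hstep : ∀ n, ENNReal.ofReal (∫ y, g n y ∂α - Real.log (en n)) ≤ R :=
      fun n => step2 P μ ν γ hγ1 hγ2 (hg_meas n) (hg_bd n)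
    have hsplit : ∀ n, ENNReal.ofReal (∫ y, g n y ∂α) ≤
        R + ENNReal.ofReal (Real.log (en n)) := by
      intro n
      calc ENNReal.ofReal (∫ y, g n y ∂α)
          = ENNReal.ofReal ((∫ y, g n y ∂α - Real.log (en n)) + Real.log (en n)) := by
            ring_nf
        _ ≤ ENNReal.ofReal (∫ y, g n y ∂α - Real.log (en n))
            + ENNReal.ofReal (Real.log (en n)) := ENNReal.ofReal_add_le
        _ ≤ R + ENNReal.ofReal (Real.log (en n)) := add_le_add_left (hstep n) _
    have hlimR : Filter.Tendsto (fun n => R + ENNReal.ofReal (Real.log (en n)))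
        Filter.atTop (nhds R) := by
      have := Filter.Tendsto.add (tendsto_const_nhds (x := R) (f := Filter.atTop)) hlog
      simpa using this
    calc ∫⁻ x, ENNReal.ofReal (t x * Real.log (t x) - t x + 1) ∂β
        ≤ Filter.liminf (fun n => ∫⁻ x, ENNReal.ofReal (u n x) ∂β) Filter.atTop := hfatou
      _ = Filter.liminf (fun n => ENNReal.ofReal (∫ y, g n y ∂α)) Filter.atTop := by
          simp_rw [hlin]
      _ ≤ Filter.liminf (fun n => R + ENNReal.ofReal (Real.log (en n))) Filter.atTop :=
          Filter.liminf_le_liminf (Filter.Eventually.of_forall hsplit)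
      _ = R := hlimR.liminf_eq


end Helpers

/-- **Convexity principle for the KL divergence** (Theorem 2.5(1) of the paper). -/
theorem convexity_principle_kl {X : Type*} [MeasurableSpace X]
    [TopologicalSpace X] [PolishSpace X] [BorelSpace X]
    (P : Kernel X X) [IsMarkovKernel P]
    (ρ : X → X → ℝ≥0∞) (hρ : Measurable (Function.uncurry ρ))
    (hone : ∀ x y, klDiv (P x) (P y) ≤ ρ x y)
    (μ ν : Measure X) [IsProbabilityMeasure μ] [IsProbabilityMeasure ν] :
    klDiv (μ.bind (fun x => P x)) (ν.bind (fun x => P x)) ≤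
      ⨅ γ ∈ {γ : Measure (X × X) | IsCoupling γ μ ν}, ∫⁻ p, ρ p.1 p.2 ∂γ := by
  refine le_iInf fun γ => le_iInf fun hγ => ?_
  obtain ⟨h1, h2⟩ : IsCoupling γ μ ν := hγ
  exact (key P μ ν γ h1 h2).trans (lintegral_mono fun p => hone p.1 p.2)

end SCR
end
end
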